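/- arXiv:2207.14122 — 13 statements merged into one kernel-verified Lean document; each statement's English description precedes it below -/
import Mathlib

section
/- Let G be a connected simple graph with at least 3 vertices such that det(G) ≠ 1. Then det'(G) ≤ det(G). -/
open SimpleGraph

section helpers
variable {V : Type*} {G : SimpleGraph V}

private lemma iso_dist (hconn : G.Connected) (φ : G ≃g G) (u v : V) :
    G.dist (φ u) (φ v) = G.dist u v := by
  have key : ∀ (ψ : G ≃g G) (a b : V), G.dist (ψ a) (ψ b) ≤ G.dist a b := by
    intro ψ a b
    obtain ⟨p, hp⟩ := hconn.exists_walk_length_eq_dist a b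
    calc G.dist (ψ a) (ψ b) ≤ (p.map ψ.toHom).length := SimpleGraph.dist_le _
      _ = p.length := p.length_map _
      _ = _ := hp
  refine le_antisymm (key φ u v) ?_
  have := key φ.symm (φ u) (φ v)
  simpa using this

private lemma exists_step (hconn : G.Connected) {u v : V} (h : u ≠ v) :
    ∃ x, G.Adj u x ∧ G.dist x v + 1 = G.dist u v := by
  obtain ⟨p, hp⟩ := hconn.exists_walk_length_eq_dist u v
  cases p with
  | nil => exact absurd rfl h
  | @cons _ x _ ha q =>
    refine ⟨x, ha, ?_⟩
    have h1 : G.dist x v ≤ q.length := SimpleGraph.dist_le q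
    have h2 : G.dist u v ≤ G.dist u x + G.dist x v := hconn.dist_triangle
    have h3 : G.dist u x = 1 := SimpleGraph.dist_eq_one_iff_adj.mpr ha
    have h4 : (SimpleGraph.Walk.cons ha q).length = q.length + 1 :=
      SimpleGraph.Walk.length_cons _ _
    omega

private lemma map_fix {φ : G ≃g G} {a b : V} (h : Sym2.map φ (s(a,b)) = s(a,b)) :
    (φ a = a ∧ φ b = b) ∨ (φ a = b ∧ φ b = a) := by
  rw [Sym2.map_pair_eq, Sym2.eq_iff] at h
  exact h

private lemma pin [Fintype V] (hconn : G.Connected) (hcard : 3 ≤ Fintype.card V)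
    {v₁ v₂ : V} (hne : v₁ ≠ v₂) :
    ∃ f₁ f₂ : Sym2 V, f₁ ∈ G.edgeSet ∧ f₂ ∈ G.edgeSet ∧
      ∀ φ : G ≃g G, Sym2.map φ f₁ = f₁ → Sym2.map φ f₂ = f₂ → φ v₁ = v₁ ∧ φ v₂ = v₂ := by
  have hℓpos : 0 < G.dist v₁ v₂ := hconn.pos_dist_of_ne hne
  set ℓ := G.dist v₁ v₂ with hℓ
  classical
  rcases show ℓ = 1 ∨ ℓ = 2 ∨ 3 ≤ ℓ by omega with h1 | h2 | h3
  · -- adjacent case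
    rw [hℓ] at h1
    have hadj : G.Adj v₁ v₂ := SimpleGraph.dist_eq_one_iff_adj.mp h1
    obtain ⟨w, hw⟩ : ∃ w : V, w ∉ ({v₁, v₂} : Set V) := by
      have hcompl : (({v₁, v₂} : Finset V))ᶜ.Nonempty := by
        rw [← Finset.card_pos, Finset.card_compl]
        have h2 : ({v₁, v₂} : Finset V).card ≤ 2 :=
          (Finset.card_insert_le _ _).trans (by simp)
        omega
      obtain ⟨w, hw⟩ := hcompl
      refine ⟨w, ?_⟩
      simp only [Finset.mem_compl, Finset.mem_insert, Finset.mem_singleton] at hw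
      simpa using hw
    obtain ⟨p⟩ := hconn v₁ w
    obtain ⟨dart, _, hfst, hsnd⟩ := p.exists_boundary_dart {v₁, v₂} (by simp) hw
    have hdadj : G.Adj dart.fst dart.snd := dart.adj
    have hz1 : dart.snd ≠ v₁ := fun h => hsnd (by simp [h])
    have hz2 : dart.snd ≠ v₂ := fun h => hsnd (by simp [h])
    rcases hfst with hfst | hfst
    · -- dart.fst = v₁
      refine ⟨s(v₁, v₂), s(v₁, dart.snd), hadj, by rw [← hfst]; exact hdadj, ?_⟩
      intro φ hm1 hm2
      rcases map_fix hm1 with ⟨ha, hb⟩ | ⟨ha, hb⟩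
      · exact ⟨ha, hb⟩
      · rcases map_fix hm2 with ⟨hc, _⟩ | ⟨hc, _⟩
        · exact absurd (ha ▸ hc) hne.symm
        · exact absurd (ha ▸ hc).symm hz2
    · -- dart.fst = v₂
      have hfst : dart.fst = v₂ := hfst
      refine ⟨s(v₁, v₂), s(v₂, dart.snd), hadj, by rw [← hfst]; exact hdadj, ?_⟩
      intro φ hm1 hm2
      rcases map_fix hm1 with ⟨ha, hb⟩ | ⟨ha, hb⟩
      · exact ⟨ha, hb⟩
      · rcases map_fix hm2 with ⟨hc, _⟩ | ⟨hc, _⟩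
        · exact absurd (hb ▸ hc) hne
        · exact absurd (hb ▸ hc).symm hz1
  · -- distance 2: common neighbor
    obtain ⟨x, hx_adj, hx_dist⟩ := exists_step hconn hne
    rw [← hℓ, h2] at hx_dist
    have hx2 : G.Adj x v₂ := SimpleGraph.dist_eq_one_iff_adj.mp (by omega)
    refine ⟨s(v₁, x), s(x, v₂), hx_adj, hx2, ?_⟩
    have hxv1 : x ≠ v₁ := fun h => G.irrefl (h ▸ hx_adj)
    have hxv2 : x ≠ v₂ := fun h => G.irrefl (h ▸ hx2)
    intro φ hm1 hm2
    rcases map_fix hm1 with ⟨ha, hb⟩ | ⟨ha, hb⟩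
    · rcases map_fix hm2 with ⟨_, hd⟩ | ⟨hc, _⟩
      · exact ⟨ha, hd⟩
      · exact absurd (hb ▸ hc) hxv2
    · rcases map_fix hm2 with ⟨hc, _⟩ | ⟨hc, _⟩
      · exact absurd (hb ▸ hc).symm hxv1
      · exact absurd (hb.symm.trans hc) hne
  · -- distance ≥ 3
    obtain ⟨x, hx_adj, hx_dist⟩ := exists_step hconn hne
    rw [← hℓ] at hx_dist
    have hxv2 : x ≠ v₂ := by
      intro h; rw [h, SimpleGraph.dist_self] at hx_dist; omega
    obtain ⟨y, hy_adj, hy_dist⟩ := exists_step hconn (Ne.symm hxv2)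
    -- hy_dist : G.dist y x + 1 = G.dist v₂ x
    have hdxv2 : G.dist x v₂ + 1 = ℓ := hx_dist
    have hdyx : G.dist y x + 1 = G.dist v₂ x := hy_dist
    have hcomm : G.dist v₂ x = G.dist x v₂ := SimpleGraph.dist_comm ..
    have hdv1y : G.dist v₁ y + 1 = ℓ := by
      have htri1 : G.dist v₁ v₂ ≤ G.dist v₁ y + G.dist y v₂ := hconn.dist_triangle
      have htri2 : G.dist v₁ y ≤ G.dist v₁ x + G.dist x y := hconn.dist_triangle
      have h1 : G.dist v₁ x = 1 := SimpleGraph.dist_eq_one_iff_adj.mpr hx_adj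
      have h2 : G.dist y v₂ = 1 := SimpleGraph.dist_eq_one_iff_adj.mpr hy_adj.symm
      have h3 : G.dist x y = G.dist y x := SimpleGraph.dist_comm ..
      omega
    refine ⟨s(v₁, x), s(v₂, y), hx_adj, hy_adj, ?_⟩
    intro φ hm1 hm2
    have hdφ : G.dist (φ v₁) (φ v₂) = ℓ := by rw [iso_dist hconn, hℓ]
    rcases map_fix hm1 with ⟨ha, _⟩ | ⟨ha, _⟩
    · rcases map_fix hm2 with ⟨hc, _⟩ | ⟨hc, _⟩
      · exact ⟨ha, hc⟩
      · exfalso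
        rw [ha, hc] at hdφ
        -- G.dist v₁ y = ℓ but = ℓ - 1
        omega
    · exfalso
      rcases map_fix hm2 with ⟨hc, _⟩ | ⟨hc, _⟩
      · rw [ha, hc] at hdφ
        omega
      · rw [ha, hc] at hdφ
        -- G.dist x y = ℓ but ≤ ℓ - 2
        have h3 : G.dist x y = G.dist y x := SimpleGraph.dist_comm ..
        omega

end helpers

/-- `S` is a vertex determining set of `G`: the only automorphism of `G`
fixing every vertex of `S` is the identity. -/
def IsVertexDetSet {V : Type*} (G : SimpleGraph V) (S : Set V) : Prop :=
  ∀ φ : G ≃g G, (∀ v ∈ S, φ v = v) → ∀ w, φ w = w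

/-- `T` is an edge determining set of `G`: `T` consists of edges of `G`, and the only
automorphism of `G` mapping each edge of `T` to itself (as an unordered pair) is the identity. -/
def IsEdgeDetSet {V : Type*} (G : SimpleGraph V) (T : Set (Sym2 V)) : Prop :=
  T ⊆ G.edgeSet ∧ ∀ φ : G ≃g G, (∀ e ∈ T, Sym2.map φ e = e) → ∀ w, φ w = w

/-- The determining number `det(G)`: the minimum size of a vertex determining set. -/
noncomputable def detNum {V : Type*} (G : SimpleGraph V) : ℕ :=
  sInf {k | ∃ S : Finset V, S.card = k ∧ IsVertexDetSet G ↑S}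

/-- The determining index `det'(G)`: the minimum size of an edge determining set. -/
noncomputable def detIndex {V : Type*} (G : SimpleGraph V) : ℕ :=
  sInf {k | ∃ T : Finset (Sym2 V), T.card = k ∧ IsEdgeDetSet G ↑T}

theorem detIndex_le_detNum {V : Type*} [Fintype V] (G : SimpleGraph V)
    (hconn : G.Connected) (hcard : 3 ≤ Fintype.card V) (hdet : detNum G ≠ 1) :
    detIndex G ≤ detNum G := by
  classical
  have hsetne : {k | ∃ S : Finset V, S.card = k ∧ IsVertexDetSet G ↑S}.Nonempty := by
    refine ⟨Fintype.card V, Finset.univ, Finset.card_univ, ?_⟩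
    intro φ h w
    exact h w (by simp)
  have hmem : detNum G ∈ {k | ∃ S : Finset V, S.card = k ∧ IsVertexDetSet G ↑S} := by
    rw [detNum]
    exact Nat.sInf_mem hsetne
  obtain ⟨S, hScard, hSdet⟩ := hmem
  rcases Nat.lt_or_ge (detNum G) 2 with hlt | hge
  · -- detNum G = 0
    have hd0 : detNum G = 0 := by omega
    have hSempty : S = ∅ := Finset.card_eq_zero.mp (by rw [hScard, hd0])
    have hall : ∀ φ : G ≃g G, ∀ w, φ w = w := by
      intro φ
      refine hSdet φ ?_
      intro v hv
      rw [hSempty] at hv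
      simp at hv
    have h0 : detIndex G ≤ 0 := by
      rw [detIndex]
      refine Nat.sInf_le ⟨(∅ : Finset (Sym2 V)), by simp, ?_, fun φ _ => hall φ⟩
      simp
    omega
  · -- detNum G ≥ 2
    obtain ⟨v₁, hv₁⟩ : S.Nonempty := Finset.card_pos.mp (by omega)
    obtain ⟨v₂, hv₂, hne21⟩ : ∃ v ∈ S, v ≠ v₁ :=
      Finset.exists_mem_ne (by omega) v₁
    have hne12 : v₁ ≠ v₂ := hne21.symm
    obtain ⟨f₁, f₂, hf₁E, hf₂E, hpin⟩ := pin hconn hcard hne12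
    have step : ∀ v : V, v ≠ v₁ → ∃ x, G.Adj v x ∧ G.dist x v₁ + 1 = G.dist v v₁ :=
      fun v h => exists_step hconn h
    choose! u hu1 hu2 using step
    set S' : Finset V := (S.erase v₁).erase v₂ with hS'
    set T : Finset (Sym2 V) :=
      insert f₁ (insert f₂ (S'.image (fun v => s(v, u v)))) with hT
    have hS'1 : ∀ v ∈ S', v ≠ v₁ := by
      intro v hv
      exact Finset.ne_of_mem_erase (Finset.mem_of_mem_erase hv)
    have hTcard : T.card ≤ detNum G := by
      have hc1 : T.card ≤ (S'.image (fun v => s(v, u v))).card + 2 := by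
        calc T.card ≤ (insert f₂ (S'.image (fun v => s(v, u v)))).card + 1 :=
              Finset.card_insert_le _ _
          _ ≤ (S'.image (fun v => s(v, u v))).card + 1 + 1 := by
              have := Finset.card_insert_le f₂ (S'.image (fun v => s(v, u v)))
              omega
      have hc2 : (S'.image (fun v => s(v, u v))).card ≤ S'.card := Finset.card_image_le
      have hc3 : S'.card = detNum G - 2 := by
        rw [hS', Finset.card_erase_of_mem (Finset.mem_erase.mpr ⟨hne21, hv₂⟩),
          Finset.card_erase_of_mem hv₁, hScard]
        omega
      omega
    have hTdet : IsEdgeDetSet G ↑T := by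
      constructor
      · intro e he
        rw [Finset.mem_coe, hT] at he
        rcases Finset.mem_insert.mp he with rfl | he
        · exact hf₁E
        rcases Finset.mem_insert.mp he with rfl | he
        · exact hf₂E
        obtain ⟨v, hv, rfl⟩ := Finset.mem_image.mp he
        exact (G.mem_edgeSet).mpr (hu1 v (hS'1 v hv))
      · intro φ hφ w
        have hf1 := hφ f₁ (by rw [Finset.mem_coe, hT]; simp)
        have hf2 := hφ f₂ (by rw [Finset.mem_coe, hT]; simp)
        obtain ⟨hfix1, hfix2⟩ := hpin φ hf1 hf2
        refine hSdet φ ?_ w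
        intro v hv
        rw [Finset.mem_coe] at hv
        by_cases hveq1 : v = v₁
        · rw [hveq1]; exact hfix1
        by_cases hveq2 : v = v₂
        · rw [hveq2]; exact hfix2
        have hvS' : v ∈ S' := by
          rw [hS']
          exact Finset.mem_erase.mpr ⟨hveq2, Finset.mem_erase.mpr ⟨hveq1, hv⟩⟩
        have he := hφ s(v, u v) (by
          rw [Finset.mem_coe, hT]
          refine Finset.mem_insert_of_mem (Finset.mem_insert_of_mem ?_)
          exact Finset.mem_image.mpr ⟨v, hvS', rfl⟩)
        rcases map_fix he with ⟨ha, _⟩ | ⟨ha, _⟩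
        · exact ha
        · exfalso
          have hdd : G.dist (φ v) (φ v₁) = G.dist v v₁ := iso_dist hconn φ v v₁
          rw [ha, hfix1] at hdd
          have := hu2 v hveq1
          omega
    rw [detIndex]
    calc sInf {k | ∃ T : Finset (Sym2 V), T.card = k ∧ IsEdgeDetSet G ↑T} ≤ T.card :=
          Nat.sInf_le ⟨T, rfl, hTdet⟩
      _ ≤ detNum G := hTcard
end

section
/- Let G be a connected simple graph with at least 3 vertices. Then det(G) ≤ 2·det'(G). -/
-- auxiliary: in a connected graph on ≥ 3 vertices, any automorphism fixing every
-- edge setwise is the identity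
lemma edgeSet_det {V : Type*} [Fintype V] (G : SimpleGraph V)
    (hconn : G.Connected) (hcard : 3 ≤ Fintype.card V)
    (φ : G ≃g G) (hfix : ∀ e ∈ G.edgeSet, Sym2.map φ e = e) : ∀ w, φ w = w := by
  classical
  intro w
  by_contra hw
  -- w has a neighbor u
  obtain ⟨u, hwu⟩ : ∃ u, G.Adj w u := by
    have h2 : 1 < Fintype.card V := by omega
    obtain ⟨z, hz⟩ := Fintype.exists_ne_of_one_lt_card h2 w
    obtain ⟨p⟩ := hconn.preconnected w z
    cases p with
    | nil => exact absurd rfl hz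
    | cons h q => exact ⟨_, h⟩
  have hedge : Sym2.map φ s(w, u) = s(w, u) := hfix _ (G.mem_edgeSet.mpr hwu)
  rw [Sym2.map_pair_eq, Sym2.eq_iff] at hedge
  have hφw : φ w = u ∧ φ u = w := by
    rcases hedge with ⟨h1, h2⟩ | ⟨h1, h2⟩
    · exact absurd h1 hw
    · exact ⟨h1, h2⟩
  have hne : w ≠ u := G.ne_of_adj hwu
  -- every neighbor of w is u, and every neighbor of u is w
  have hNw : ∀ x, G.Adj w x → x = u := by
    intro x hx
    by_contra hxu
    have := hfix _ (G.mem_edgeSet.mpr hx)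
    rw [Sym2.map_pair_eq, Sym2.eq_iff] at this
    rcases this with ⟨h1, _⟩ | ⟨h1, _⟩
    · exact hw h1
    · exact hxu (h1 ▸ hφw.1.symm ▸ rfl) |>.elim
  have hNu : ∀ x, G.Adj u x → x = w := by
    intro x hx
    by_contra hxw
    have := hfix _ (G.mem_edgeSet.mpr hx)
    rw [Sym2.map_pair_eq, Sym2.eq_iff] at this
    rcases this with ⟨h1, _⟩ | ⟨h1, _⟩
    · exact hne (hφw.2 ▸ h1.symm ▸ rfl)
    · exact hxw (h1 ▸ hφw.2.symm ▸ rfl) |>.elim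
  -- then everything reachable from w lies in {w, u}, contradicting card ≥ 3
  have key : ∀ (a z : V) (p : G.Walk a z), (a = w ∨ a = u) → (z = w ∨ z = u) := by
    intro a z p
    induction p with
    | nil => exact id
    | cons h q ih =>
      rename_i x y _ _
      intro ha
      apply ih
      rcases ha with rfl | rfl
      · exact Or.inr (hNw _ h)
      · exact Or.inl (hNu _ h)
  obtain ⟨z, hz⟩ : ∃ z : V, z ≠ w ∧ z ≠ u := by
    by_contra hc
    push_neg at hc
    have : (Finset.univ : Finset V) ⊆ {w, u} := by
      intro z _
      simp only [Finset.mem_insert, Finset.mem_singleton]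
      rcases eq_or_ne z w with h | h
      · exact Or.inl h
      · exact Or.inr (hc z h)
    have := Finset.card_le_card this
    simp only [Finset.card_univ] at this
    have h2 : ({w, u} : Finset V).card ≤ 2 := Finset.card_insert_le _ _ |>.trans (by simp)
    omega
  obtain ⟨p⟩ := hconn.preconnected w z
  rcases key w z p (Or.inl rfl) with h | h
  · exact hz.1 h
  · exact hz.2 h

theorem detNum_le_two_mul_detIndex {V : Type*} [Fintype V] (G : SimpleGraph V)
    (hconn : G.Connected) (hcard : 3 ≤ Fintype.card V) :
    detNum G ≤ 2 * detIndex G := by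
  classical
  -- the set defining detIndex is nonempty: take all edges
  have hne : {k | ∃ T : Finset (Sym2 V), T.card = k ∧ IsEdgeDetSet G ↑T}.Nonempty := by
    refine ⟨G.edgeFinset.card, G.edgeFinset, rfl, ?_, ?_⟩
    · rw [SimpleGraph.coe_edgeFinset]
    · intro φ hφ
      exact edgeSet_det G hconn hcard φ (by
        intro e he
        exact hφ e (by rwa [SimpleGraph.coe_edgeFinset]))
  obtain ⟨T, hTcard, hTsub, hTdet⟩ := Nat.sInf_mem hne
  set S : Finset V := T.biUnion (fun e => {e.out.1, e.out.2}) with hS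
  have hSdet : IsVertexDetSet G ↑S := by
    intro φ hφ w
    apply hTdet φ
    intro e he
    have h1 : e.out.1 ∈ S := Finset.mem_biUnion.mpr ⟨e, he, by simp⟩
    have h2 : e.out.2 ∈ S := Finset.mem_biUnion.mpr ⟨e, he, by simp⟩
    have he' : s(e.out.1, e.out.2) = e := e.out_eq
    rw [← he', Sym2.map_pair_eq, hφ _ h1, hφ _ h2]
  have hScard : S.card ≤ 2 * T.card := by
    calc S.card ≤ ∑ e ∈ T, ({e.out.1, e.out.2} : Finset V).card := Finset.card_biUnion_le
    _ ≤ ∑ _e ∈ T, 2 := Finset.sum_le_sum (fun e _ => Finset.card_insert_le _ _ |>.trans (by simp))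
    _ = 2 * T.card := by rw [Finset.sum_const, smul_eq_mul, mul_comm]
  have h1 : detNum G ≤ S.card := Nat.sInf_le ⟨S, rfl, hSdet⟩
  calc detNum G ≤ S.card := h1
  _ ≤ 2 * T.card := hScard
  _ = 2 * detIndex G := by rw [hTcard]; rfl
end

section
/- Let G be a connected simple graph with at least 3 vertices such that det(G) ≠ 1. Then (1/2)·det(G) ≤ det'(G) ≤ det(G), i.e. det(G) ≤ 2·det'(G) and det'(G) ≤ det(G). -/
/-!
Every edge determining set `T` yields the vertex determining set of its endpoints, which has
at most `2 |T|` elements. Conversely, let `D` be a vertex determining set with `|D| ≠ 1`.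
Automorphisms preserve distances, so an automorphism fixing a vertex `x` and an edge `vw` with
`w` closer to `x` than `v` must fix `v`. Choosing `x ≠ y` in `D`, two edges suffice to pin down
both `x` and `y` (an edge at each end of a geodesic from `x` to `y`, or, when `x` and `y` are
adjacent, the edge `xy` together with an edge leaving `{x, y}`), and every other `v ∈ D` then
costs one edge pointing towards `x`.
-/

namespace SimpleGraph

variable {V W : Type*} {G : SimpleGraph V} {H : SimpleGraph W} {u v w x y z : V}

lemma Iso.dist_map_le (φ : G ≃g H) (u v : V) : H.dist (φ u) (φ v) ≤ G.dist u v := by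
  by_cases h : G.Reachable u v
  · obtain ⟨p, hp⟩ := h.exists_walk_length_eq_dist
    calc H.dist (φ u) (φ v) ≤ (p.map φ.toHom).length := dist_le _
      _ = G.dist u v := by rw [Walk.length_map, hp]
  · rw [dist_eq_zero_of_not_reachable (mt Iso.reachable_iff.mp h)]
    exact Nat.zero_le _

lemma Iso.dist_map (φ : G ≃g H) (u v : V) : H.dist (φ u) (φ v) = G.dist u v := by
  refine le_antisymm (φ.dist_map_le u v) ?_
  simpa using φ.symm.dist_map_le (φ u) (φ v)

lemma Reachable.exists_adj_dist_eq_add_one (h : G.Reachable u v) (hne : u ≠ v) :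
    ∃ w, G.Adj u w ∧ G.dist u v = G.dist w v + 1 := by
  obtain ⟨p, hp⟩ := h.exists_walk_length_eq_dist
  cases p with
  | nil => exact absurd rfl hne
  | @cons _ w _ hadj q =>
    refine ⟨w, hadj, ?_⟩
    have hqv : G.dist w v ≤ q.length := dist_le q
    have htri : G.dist u v ≤ G.dist u w + G.dist w v := hadj.reachable.dist_triangle_left v
    rw [Walk.length_cons] at hp
    rw [dist_eq_one_iff_adj.mpr hadj] at htri
    omega

lemma Iso.apply_eq_of_map_edge_eq (φ : G ≃g G) (hx : φ x = x) (hw : G.dist w x < G.dist v x)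
    (he : Sym2.map φ s(v, w) = s(v, w)) : φ v = v := by
  rw [Sym2.map_mk, Sym2.eq_iff] at he
  rcases he with ⟨hv, -⟩ | ⟨hv, -⟩
  · exact hv
  · have := φ.dist_map v x
    rw [hv, hx] at this
    omega

lemma Connected.exists_edges_fixing_of_fixed [DecidableEq V] (hconn : G.Connected) (x : V)
    (S : Finset V) :
    ∃ T : Finset (Sym2 V), T.card ≤ S.card ∧ ↑T ⊆ G.edgeSet ∧
      ∀ φ : G ≃g G, φ x = x → (∀ e ∈ T, Sym2.map φ e = e) →
        ∀ v ∈ S, φ v = v := by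
  choose! next hnextAdj hnextDist using
    fun v (hv : v ≠ x) => (hconn v x).exists_adj_dist_eq_add_one hv
  refine ⟨(S.erase x).image fun v => s(v, next v), ?_, ?_, ?_⟩
  · exact Finset.card_image_le.trans (Finset.card_erase_le)
  · intro e he
    obtain ⟨v, hv, rfl⟩ := Finset.mem_image.mp he
    exact hnextAdj v (Finset.ne_of_mem_erase hv)
  · intro φ hx hT v hv
    by_cases hvx : v = x
    · exact hvx ▸ hx
    have hcloser : G.dist (next v) x < G.dist v x := by
      have := hnextDist v hvx
      omega
    exact φ.apply_eq_of_map_edge_eq hx hcloser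
      (hT _ (Finset.mem_image_of_mem _ (Finset.mem_erase.mpr ⟨hvx, hv⟩)))

lemma Connected.exists_edges_fixing_of_adj (hconn : G.Connected) (hxy : G.Adj x y)
    (hzx : z ≠ x) (hzy : z ≠ y) :
    ∃ T : Finset (Sym2 V), T.card ≤ 2 ∧ ↑T ⊆ G.edgeSet ∧
      ∀ φ : G ≃g G, (∀ e ∈ T, Sym2.map φ e = e) → φ x = x ∧ φ y = y := by
  classical
  obtain ⟨d, -, hdfst, hdsnd⟩ := (hconn x z).some.exists_boundary_dart {x, y} (by simp)
    (by simp [hzx, hzy])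
  refine ⟨{s(x, y), s(d.fst, d.snd)}, Finset.card_le_two, ?_, ?_⟩
  · simp [Set.insert_subset_iff, hxy, d.adj]
  · intro φ hT
    have hxy' := hT s(x, y) (by simp)
    have hd := hT s(d.fst, d.snd) (by simp)
    rw [Sym2.map_mk, Sym2.eq_iff] at hxy' hd
    have hne : x ≠ y := hxy.ne
    simp only [Set.mem_insert_iff, Set.mem_singleton_iff] at hdfst hdsnd
    rcases hxy' with h | ⟨hx, hy⟩
    · exact h
    · exfalso
      rcases hdfst with hf | hf <;> rw [hf] at hd <;> grind

lemma Connected.exists_edges_fixing_of_not_adj (hconn : G.Connected) (hne : x ≠ y)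
    (hxy : ¬ G.Adj x y) :
    ∃ T : Finset (Sym2 V), T.card ≤ 2 ∧ ↑T ⊆ G.edgeSet ∧
      ∀ φ : G ≃g G, (∀ e ∈ T, Sym2.map φ e = e) → φ x = x ∧ φ y = y := by
  classical
  obtain ⟨p, hxp, hp⟩ := (hconn x y).exists_adj_dist_eq_add_one hne
  have hyp : y ≠ p := by
    rintro rfl
    exact hxy hxp
  obtain ⟨q, hyq, hq⟩ := (hconn y p).exists_adj_dist_eq_add_one hyp
  refine ⟨{s(x, p), s(y, q)}, Finset.card_le_two, ?_, ?_⟩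
  · simp [Set.insert_subset_iff, hxp, hyq]
  · intro φ hT
    have hx := hT s(x, p) (by simp)
    have hy := hT s(y, q) (by simp)
    rw [Sym2.map_mk, Sym2.eq_iff] at hx hy
    -- with `d = dist x y`: `dist p y = d - 1`, `dist p q = d - 2` and `dist x q ≤ d - 1`
    have hdist := φ.dist_map x y
    have hxq : G.dist x q ≤ G.dist x p + G.dist p q := hconn.dist_triangle
    rw [dist_eq_one_iff_adj.mpr hxp] at hxq
    have hpy : G.dist y p = G.dist p y := dist_comm
    have hqp : G.dist q p = G.dist p q := dist_comm
    rcases hx with ⟨hx, -⟩ | ⟨hx, -⟩ <;> rcases hy with ⟨hy, -⟩ | ⟨hy, -⟩ <;>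
      rw [hx, hy] at hdist
    · exact ⟨hx, hy⟩
    all_goals omega

lemma Connected.exists_edges_fixing_pair [Fintype V] (hconn : G.Connected)
    (hcard : 3 ≤ Fintype.card V) (hne : x ≠ y) :
    ∃ T : Finset (Sym2 V), T.card ≤ 2 ∧ ↑T ⊆ G.edgeSet ∧
      ∀ φ : G ≃g G, (∀ e ∈ T, Sym2.map φ e = e) → φ x = x ∧ φ y = y := by
  classical
  by_cases hxy : G.Adj x y
  · have hlt : ({x, y} : Finset V).card < (Finset.univ : Finset V).card := by
      rw [Finset.card_univ]
      exact Finset.card_le_two.trans_lt hcard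
    obtain ⟨z, -, hz⟩ := Finset.exists_mem_notMem_of_card_lt_card hlt
    simp only [Finset.mem_insert, Finset.mem_singleton, not_or] at hz
    exact hconn.exists_edges_fixing_of_adj hxy hz.1 hz.2
  · exact hconn.exists_edges_fixing_of_not_adj hne hxy

end SimpleGraph

lemma detNum_le {V : Type*} {G : SimpleGraph V} {S : Finset V} (hS : IsVertexDetSet G ↑S) :
    detNum G ≤ S.card :=
  Nat.sInf_le ⟨S, rfl, hS⟩

lemma detIndex_le {V : Type*} {G : SimpleGraph V} {T : Finset (Sym2 V)}
    (hT : IsEdgeDetSet G ↑T) : detIndex G ≤ T.card :=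
  Nat.sInf_le ⟨T, rfl, hT⟩

lemma exists_isVertexDetSet_card_eq_detNum {V : Type*} [Fintype V] (G : SimpleGraph V) :
    ∃ S : Finset V, S.card = detNum G ∧ IsVertexDetSet G ↑S :=
  Nat.sInf_mem (s := {k | ∃ S : Finset V, S.card = k ∧ IsVertexDetSet G ↑S})
    ⟨_, Finset.univ, rfl, fun _ h w => h w (Finset.mem_univ w)⟩

lemma exists_isEdgeDetSet_card_eq_detIndex {V : Type*} {G : SimpleGraph V}
    (h : ∃ T : Finset (Sym2 V), IsEdgeDetSet G ↑T) :
    ∃ T : Finset (Sym2 V), T.card = detIndex G ∧ IsEdgeDetSet G ↑T :=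
  let ⟨T, hT⟩ := h
  Nat.sInf_mem (s := {k | ∃ T : Finset (Sym2 V), T.card = k ∧ IsEdgeDetSet G ↑T})
    ⟨_, T, rfl, hT⟩

lemma Finset.card_biUnion_sym2_toFinset_le {α : Type*} [DecidableEq α] (T : Finset (Sym2 α)) :
    (T.biUnion Sym2.toFinset).card ≤ 2 * T.card :=
  calc (T.biUnion Sym2.toFinset).card ≤ ∑ e ∈ T, e.toFinset.card := Finset.card_biUnion_le
    _ ≤ ∑ _e ∈ T, 2 := Finset.sum_le_sum fun e _ => by
        rw [Sym2.card_toFinset]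
        split_ifs <;> simp
    _ = 2 * T.card := by rw [Finset.sum_const, smul_eq_mul, mul_comm]

lemma IsEdgeDetSet.isVertexDetSet_biUnion {V : Type*} [DecidableEq V] {G : SimpleGraph V}
    {T : Finset (Sym2 V)} (hT : IsEdgeDetSet G ↑T) :
    IsVertexDetSet G ↑(T.biUnion Sym2.toFinset) := by
  intro φ hφ
  refine hT.2 φ fun e he => ?_
  refine (Sym2.map_congr fun v hv => ?_).trans (congrFun Sym2.map_id e)
  exact hφ v (Finset.mem_biUnion.mpr ⟨e, he, Sym2.mem_toFinset.mpr hv⟩)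

lemma IsVertexDetSet.exists_isEdgeDetSet_card_le {V : Type*} [Fintype V] {G : SimpleGraph V}
    {D : Finset V} (hD : IsVertexDetSet G ↑D) (hconn : G.Connected)
    (hcard : 3 ≤ Fintype.card V) (hD1 : D.card ≠ 1) :
    ∃ T : Finset (Sym2 V), T.card ≤ D.card ∧ IsEdgeDetSet G ↑T := by
  classical
  rcases D.eq_empty_or_nonempty with rfl | hDne
  · exact ⟨∅, le_rfl, by simp, fun φ _ => hD φ (by simp)⟩
  obtain ⟨x, hx, y, hy, hne⟩ :=
    Finset.one_lt_card.mp (lt_of_le_of_ne hDne.card_pos (Ne.symm hD1))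
  obtain ⟨T₀, hT₀card, hT₀G, hT₀⟩ := hconn.exists_edges_fixing_pair hcard hne
  obtain ⟨T₁, hT₁card, hT₁G, hT₁⟩ :=
    hconn.exists_edges_fixing_of_fixed x ((D.erase x).erase y)
  have hrest : ((D.erase x).erase y).card + 2 = D.card := by
    rw [Finset.card_erase_of_mem (Finset.mem_erase.mpr ⟨hne.symm, hy⟩),
      Finset.card_erase_of_mem hx]
    have := hDne.card_pos
    omega
  refine ⟨T₀ ∪ T₁, ?_, ?_, fun φ hφ => hD φ fun v hv => ?_⟩
  · have := Finset.card_union_le T₀ T₁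
    omega
  · rw [Finset.coe_union]
    exact Set.union_subset hT₀G hT₁G
  · obtain ⟨hφx, hφy⟩ := hT₀ φ fun e he => hφ e (Finset.mem_union_left _ he)
    by_cases hvx : v = x
    · exact hvx ▸ hφx
    by_cases hvy : v = y
    · exact hvy ▸ hφy
    exact hT₁ φ hφx (fun e he => hφ e (Finset.mem_union_right _ he)) v
      (Finset.mem_erase.mpr ⟨hvy, Finset.mem_erase.mpr ⟨hvx, hv⟩⟩)

theorem detIndex_bounds {V : Type*} [Fintype V] (G : SimpleGraph V)
    (hconn : G.Connected) (hcard : 3 ≤ Fintype.card V) (hdet : detNum G ≠ 1) :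
    detNum G ≤ 2 * detIndex G ∧ detIndex G ≤ detNum G := by
  classical
  obtain ⟨D, hDcard, hD⟩ := exists_isVertexDetSet_card_eq_detNum G
  obtain ⟨T₀, hT₀card, hT₀⟩ :=
    hD.exists_isEdgeDetSet_card_le hconn hcard (hDcard ▸ hdet)
  obtain ⟨T, hTcard, hT⟩ := exists_isEdgeDetSet_card_eq_detIndex ⟨T₀, hT₀⟩
  constructor
  · calc detNum G ≤ (T.biUnion Sym2.toFinset).card := detNum_le hT.isVertexDetSet_biUnion
      _ ≤ 2 * T.card := T.card_biUnion_sym2_toFinset_le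
      _ = 2 * detIndex G := by rw [hTcard]
  · calc detIndex G ≤ T₀.card := detIndex_le hT₀
      _ ≤ D.card := hT₀card
      _ = detNum G := hDcard
end

section
/- Let G be a connected simple graph. If there exists a vertex v of G that has the neighbor-swapping property, then every vertex of G has the neighbor-swapping property. -/
/-- A vertex `v` has the neighbor-swapping property: for every neighbor `u` of `v`
there is an automorphism of `G` swapping `u` and `v`. -/
def HasNeighborSwap {V : Type*} (G : SimpleGraph V) (v : V) : Prop :=
  ∀ u, G.Adj v u → ∃ φ : G ≃g G, φ v = u ∧ φ u = v

lemma hasNeighborSwap_map {V : Type*} (G : SimpleGraph V) (ψ : G ≃g G) {v : V}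
    (h : HasNeighborSwap G v) : HasNeighborSwap G (ψ v) := by
  intro w hw
  have hv : G.Adj v (ψ.symm w) := by
    have := ψ.symm.map_adj_iff.mpr hw
    simpa using this
  obtain ⟨φ, h1, h2⟩ := h (ψ.symm w) hv
  refine ⟨(ψ.symm.trans φ).trans ψ, ?_, ?_⟩ <;> simp [h1, h2]

lemma hasNeighborSwap_of_walk {V : Type*} (G : SimpleGraph V) {a b : V}
    (h : HasNeighborSwap G a) (p : G.Walk a b) : HasNeighborSwap G b := by
  induction p with
  | nil => exact h
  | cons hadj _ ih =>
    apply ih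
    obtain ⟨φ, h1, h2⟩ := h _ hadj
    have := hasNeighborSwap_map G φ h
    rwa [h1] at this

theorem neighborSwap_forall_of_exists {V : Type*} (G : SimpleGraph V)
    (hconn : G.Connected) (h : ∃ v, HasNeighborSwap G v) :
    ∀ v, HasNeighborSwap G v := by
  obtain ⟨v, hv⟩ := h
  intro v0
  obtain ⟨p⟩ := hconn.preconnected v v0
  exact hasNeighborSwap_of_walk G hv p
end

section
/- Let G be a connected simple graph. Then there exists a vertex of G with the neighbor-swapping property if and only if G is edge-flip-invariant. -/
/-- `G` is edge-flip-invariant: for every edge `{u, v}` of `G` there is an automorphism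
of `G` swapping `u` and `v`. -/
def EdgeFlipInvariant {V : Type*} (G : SimpleGraph V) : Prop :=
  ∀ u v, G.Adj u v → ∃ φ : G ≃g G, φ u = v ∧ φ v = u

lemma hasNeighborSwap_conj {V : Type*} {G : SimpleGraph V} {v : V}
    (h : HasNeighborSwap G v) (ψ : G ≃g G) : HasNeighborSwap G (ψ v) := by
  intro u hu
  have h' : G.Adj v (ψ.symm u) := by
    have := ψ.symm.map_adj_iff.mpr hu
    simpa using this
  obtain ⟨φ, h1, h2⟩ := h (ψ.symm u) h'
  refine ⟨(ψ.symm.trans φ).trans ψ, ?_, ?_⟩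
  · simp [h1]
  · simp [h2]

lemma hasNeighborSwap_walk {V : Type*} {G : SimpleGraph V} :
    ∀ {a b : V}, G.Walk a b → HasNeighborSwap G a → HasNeighborSwap G b := by
  intro a b p
  induction p with
  | nil => exact fun h => h
  | cons hadj p ih =>
    intro h
    obtain ⟨φ, h1, _⟩ := h _ hadj
    exact ih (h1 ▸ hasNeighborSwap_conj h φ)

theorem exists_neighborSwap_iff_edgeFlipInvariant {V : Type*} (G : SimpleGraph V)
    (hconn : G.Connected) :
    (∃ v, HasNeighborSwap G v) ↔ EdgeFlipInvariant G := by
  constructor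
  · rintro ⟨v, hv⟩ u w huw
    obtain ⟨p⟩ := hconn v u
    exact hasNeighborSwap_walk p hv w huw
  · intro h
    obtain ⟨v⟩ := hconn.nonempty
    exact ⟨v, fun u hu => h v u hu⟩
end

section
/- Let G be a connected simple graph with at least 3 vertices such that det(G) = 1 and G is not edge-flip-invariant. Then det'(G) = 1. -/
theorem detIndex_eq_one_of_detNum_eq_one_not_efi {V : Type*} [Fintype V]
    (G : SimpleGraph V) (hconn : G.Connected) (hcard : 3 ≤ Fintype.card V)
    (hdet : detNum G = 1) (hefi : ¬ EdgeFlipInvariant G) :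
    detIndex G = 1 := by
  classical
  set VS := {k | ∃ S : Finset V, S.card = k ∧ IsVertexDetSet G ↑S} with hVS
  have hVSne : VS.Nonempty := by
    by_contra h
    rw [Set.not_nonempty_iff_eq_empty] at h
    rw [detNum, ← hVS, h, Nat.sInf_empty] at hdet
    exact absurd hdet.symm one_ne_zero
  have h1mem : 1 ∈ VS := by
    have := Nat.sInf_mem hVSne
    rwa [← detNum, hdet] at this
  obtain ⟨S, hS1, hSdet⟩ := h1mem
  obtain ⟨v, rfl⟩ := Finset.card_eq_one.mp hS1
  -- `v` alone determines
  have hv : ∀ φ : G ≃g G, φ v = v → ∀ z, φ z = z := by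
    intro φ hφ z
    refine hSdet φ ?_ z
    intro u hu
    simp only [Finset.coe_singleton, Set.mem_singleton_iff] at hu
    subst hu; exact hφ
  -- there is a nontrivial automorphism
  have h0not : 0 ∉ VS := by
    intro h0
    have := Nat.sInf_le h0
    rw [← detNum, hdet] at this
    omega
  have hφ0 : ∃ φ0 : G ≃g G, ∃ w, φ0 w ≠ w := by
    by_contra h
    push_neg at h
    exact h0not ⟨∅, Finset.card_empty, fun φ _ w => h φ w⟩
  obtain ⟨φ0, w0, hw0⟩ := hφ0
  -- key: there is a single determining edge
  have hexists : ∃ e ∈ G.edgeSet, ∀ φ : G ≃g G, Sym2.map φ e = e → ∀ z, φ z = z := by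
    by_contra hno
    push_neg at hno
    -- step lemma
    have hstep : ∀ w x : V, (∀ φ : G ≃g G, φ w = w → ∀ z, φ z = z) → G.Adj w x →
        (∃ φ : G ≃g G, φ w = x ∧ φ x = w) ∧
        (∀ ψ : G ≃g G, ψ x = x → ∀ z, ψ z = z) := by
      intro w x hw hadj
      obtain ⟨φ, hfix, z, hz⟩ := hno s(w, x) (G.mem_edgeSet.mpr hadj)
      rw [Sym2.map_pair_eq, Sym2.eq_iff] at hfix
      rcases hfix with ⟨hw', _⟩ | ⟨hwx, hxw⟩
      · exact absurd (hw φ hw' z) hz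
      refine ⟨⟨φ, hwx, hxw⟩, ?_⟩
      intro ψ hψ z
      have hsymm : φ.symm x = w := by
        have := congrArg φ.symm hwx
        rw [RelIso.symm_apply_apply] at this
        exact this.symm
      have hτ : ∀ y, ((φ.trans ψ).trans φ.symm) y = y := by
        refine hw ((φ.trans ψ).trans φ.symm) ?_
        show φ.symm (ψ (φ w)) = w
        rw [hwx, hψ, hsymm]
      have := hτ (φ.symm z)
      simp only [RelIso.trans_apply, RelIso.apply_symm_apply] at this
      have := congrArg φ this
      rwa [RelIso.apply_symm_apply, RelIso.apply_symm_apply] at this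
    -- propagate along walks
    have hwalk : ∀ (a b : V) (p : G.Walk a b),
        (∀ φ : G ≃g G, φ a = a → ∀ z, φ z = z) →
        (∀ φ : G ≃g G, φ b = b → ∀ z, φ z = z) := by
      intro a b p
      induction p with
      | nil => exact fun h => h
      | cons h q ih => exact fun ha => ih ((hstep _ _ ha h).2)
    have hall : ∀ a : V, ∀ φ : G ≃g G, φ a = a → ∀ z, φ z = z := by
      intro a
      obtain ⟨p⟩ := hconn.preconnected v a
      exact hwalk v a p hv
    exact hefi fun a b hadj => (hstep a b (hall a) hadj).1
  obtain ⟨e, he, hedet⟩ := hexists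
  -- conclude
  set TS := {k | ∃ T : Finset (Sym2 V), T.card = k ∧ IsEdgeDetSet G ↑T} with hTS
  have h1T : 1 ∈ TS := by
    refine ⟨{e}, Finset.card_singleton e, ?_, ?_⟩
    · intro f hf
      simp only [Finset.coe_singleton, Set.mem_singleton_iff] at hf
      subst hf; exact he
    · intro φ hφ z
      refine hedet φ ?_ z
      exact hφ e (by simp)
  have h0T : 0 ∉ TS := by
    rintro ⟨T, hT0, _, hTdet⟩
    rw [Finset.card_eq_zero] at hT0
    subst hT0
    exact hw0 (hTdet φ0 (by simp) w0)
  have hle : sInf TS ≤ 1 := Nat.sInf_le h1T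
  have hmem := Nat.sInf_mem ⟨1, h1T⟩
  rw [detIndex, ← hTS]
  interval_cases h : sInf TS
  · exact absurd hmem h0T
  · rfl
end

section
/- Let G be a connected simple graph with at least 3 vertices such that det(G) = 1 and G is edge-flip-invariant. Then det'(G) = 2. -/
theorem detIndex_eq_two_of_detNum_eq_one_efi {V : Type*} [Fintype V]
    (G : SimpleGraph V) (hconn : G.Connected) (hcard : 3 ≤ Fintype.card V)
    (hdet : detNum G = 1) (hefi : EdgeFlipInvariant G) :
    detIndex G = 2 := by
  classical
  -- there is a nontrivial automorphism
  have h0 : ¬ IsVertexDetSet G (↑(∅ : Finset V)) := by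
    intro h
    have : detNum G ≤ 0 := Nat.sInf_le ⟨∅, Finset.card_empty, h⟩
    omega
  obtain ⟨ψ, w0, hw0⟩ : ∃ ψ : G ≃g G, ∃ w, ψ w ≠ w := by
    by_contra h
    push_neg at h
    exact h0 (fun φ _ w => h φ w)
  -- a singleton vertex determining set
  have hne : {k | ∃ S : Finset V, S.card = k ∧ IsVertexDetSet G ↑S}.Nonempty :=
    ⟨Fintype.card V, Finset.univ, rfl, fun φ h w => h w (Finset.mem_univ w)⟩
  have h1 : (1 : ℕ) ∈ {k | ∃ S : Finset V, S.card = k ∧ IsVertexDetSet G ↑S} :=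
    hdet ▸ Nat.sInf_mem hne
  obtain ⟨S, hS1, hSdet⟩ := h1
  obtain ⟨v, rfl⟩ := Finset.card_eq_one.mp hS1
  have hv : ∀ φ : G ≃g G, φ v = v → ∀ w, φ w = w := by
    intro φ h
    exact hSdet φ (by intro u hu; simp only [Finset.coe_singleton, Set.mem_singleton_iff] at hu
                      subst hu; exact h)
  -- v has a neighbor
  obtain ⟨a, ha⟩ : ∃ a, G.Adj v a := by
    obtain ⟨w, hw⟩ := Fintype.exists_ne_of_one_lt_card (by omega) v
    obtain ⟨p⟩ := hconn.preconnected v w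
    cases p with
    | nil => exact absurd rfl hw
    | cons h _ => exact ⟨_, h⟩
  -- construct a 2-element edge determining set
  have hmem2 : (2 : ℕ) ∈ {k | ∃ T : Finset (Sym2 V), T.card = 2 ∧ IsEdgeDetSet G ↑T} := by
    by_cases hb : ∃ b, b ≠ a ∧ G.Adj v b
    · obtain ⟨b, hba, hvb⟩ := hb
      refine ⟨{s(v, a), s(v, b)}, ?_, ?_, ?_⟩
      · rw [Finset.card_pair]
        intro h
        rw [Sym2.eq_iff] at h
        rcases h with ⟨-, h⟩ | ⟨-, h⟩
        · exact hba h.symm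
        · exact ha.ne' h
      · intro e he
        simp only [Finset.coe_insert, Finset.coe_singleton, Set.mem_insert_iff,
          Set.mem_singleton_iff] at he
        rcases he with rfl | rfl
        · exact ha
        · exact hvb
      · intro φ hφ w
        have h1 := hφ s(v, a) (by simp)
        have h2 := hφ s(v, b) (by simp)
        rw [Sym2.map_pair_eq, Sym2.eq_iff] at h1 h2
        have hvv : φ v = v := by
          rcases h1 with ⟨h1, -⟩ | ⟨h1, -⟩
          · exact h1
          · rcases h2 with ⟨h2, -⟩ | ⟨h2, -⟩
            · exact h2
            · exact absurd (h1.symm.trans h2) hba.symm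
        exact hv φ hvv w
    · push_neg at hb
      have hNv : ∀ c, G.Adj v c → c = a := by
        intro c hc
        by_contra h
        exact (hb c h) hc
      -- a has a neighbor other than v
      obtain ⟨b, hbv, hab⟩ : ∃ b, b ≠ v ∧ G.Adj a b := by
        by_contra h
        push_neg at h
        have hNa : ∀ c, G.Adj a c → c = v := by
          intro c hc
          by_contra hcv
          exact (h c hcv) hc
        -- then the component of v is {v, a}, contradicting card ≥ 3
        have key : ∀ (x w : V) (_ : G.Walk x w), x = v ∨ x = a → w = v ∨ w = a := by
          intro x w p
          induction p with
          | nil => exact fun h => h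
          | @cons x y w hxy p ih =>
            intro hx
            apply ih
            rcases hx with rfl | rfl
            · exact Or.inr (hNv y hxy)
            · exact Or.inl (hNa y hxy)
        obtain ⟨w, hwv, hwa⟩ : ∃ w, w ≠ v ∧ w ≠ a := by
          by_contra hcon
          push_neg at hcon
          have hsub : (Finset.univ : Finset V) ⊆ {v, a} := by
            intro x _
            rcases em (x = v) with rfl | hxv
            · simp
            · simp [hcon x hxv]
          have := Finset.card_le_card hsub
          have h2 : ({v, a} : Finset V).card ≤ 2 := Finset.card_insert_le _ _ |>.trans (by simp)
          simp only [Finset.card_univ] at this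
          omega
        obtain ⟨p⟩ := hconn.preconnected v w
        rcases key v w p (Or.inl rfl) with h | h
        · exact hwv h
        · exact hwa h
      refine ⟨{s(v, a), s(a, b)}, ?_, ?_, ?_⟩
      · rw [Finset.card_pair]
        intro h
        rw [Sym2.eq_iff] at h
        rcases h with ⟨h, -⟩ | ⟨h, -⟩
        · exact ha.ne h
        · exact hbv (h.symm ▸ rfl)
      · intro e he
        simp only [Finset.coe_insert, Finset.coe_singleton, Set.mem_insert_iff,
          Set.mem_singleton_iff] at he
        rcases he with rfl | rfl
        · exact ha
        · exact hab
      · intro φ hφ w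
        have h1 := hφ s(v, a) (by simp)
        have h2 := hφ s(a, b) (by simp)
        rw [Sym2.map_pair_eq, Sym2.eq_iff] at h1 h2
        have hvv : φ v = v := by
          rcases h1 with ⟨h1, -⟩ | ⟨-, h1⟩
          · exact h1
          · -- φ a = v, but φ a ∈ {a, b}
            rcases h2 with ⟨h2, -⟩ | ⟨h2, -⟩
            · exact absurd (h1.symm.trans h2) ha.ne
            · exact absurd (h1.symm.trans h2) (fun h => hbv h.symm)
        exact hv φ hvv w
  -- lower bound: every edge determining set has size ≥ 2
  have hge : ∀ k ∈ {k | ∃ T : Finset (Sym2 V), T.card = k ∧ IsEdgeDetSet G ↑T}, 2 ≤ k := by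
    rintro k ⟨T, hTc, hTsub, hTdet⟩
    by_contra hk
    push_neg at hk
    interval_cases k
    · rw [Finset.card_eq_zero] at hTc
      subst hTc
      exact hw0 (hTdet ψ (by simp) w0)
    · obtain ⟨e, rfl⟩ := Finset.card_eq_one.mp hTc
      have he : e ∈ G.edgeSet := hTsub (by simp)
      induction e using Sym2.ind with
      | _ u w =>
        rw [SimpleGraph.mem_edgeSet] at he
        obtain ⟨φ, hφu, hφw⟩ := hefi u w he
        have := hTdet φ (by
          intro e' he'
          simp only [Finset.coe_singleton, Set.mem_singleton_iff] at he'
          subst he'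
          rw [Sym2.map_pair_eq, hφu, hφw, Sym2.eq_swap]) u
        rw [hφu] at this
        exact he.ne' this
  apply le_antisymm
  · exact Nat.sInf_le hmem2
  · exact le_csInf ⟨2, hmem2⟩ hge
end

section
/- For every n ≥ 3, the determining index of the cycle graph C_n on n vertices satisfies det'(C_n) = 2. -/
/-- The cycle graph `Cₙ` on `ℤ/nℤ`: `i` and `j` are adjacent iff `i - j = ±1`. -/
def cycleGraphZMod (n : ℕ) : SimpleGraph (ZMod n) :=
  SimpleGraph.fromRel (fun i j => i - j = 1)

lemma cyc_adj {n : ℕ} {i j : ZMod n} :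
    (cycleGraphZMod n).Adj i j ↔ i ≠ j ∧ (i - j = 1 ∨ j - i = 1) := by
  simp [cycleGraphZMod]

lemma cyc_two_ne {n : ℕ} (hn : 3 ≤ n) : (2 : ZMod n) ≠ 0 := by
  haveI : NeZero n := ⟨by omega⟩
  intro h
  rw [show ((2:ZMod n)) = ((2:ℕ):ZMod n) by push_cast; ring,
    ZMod.natCast_eq_zero_iff] at h
  have := Nat.le_of_dvd (by norm_num) h
  omega

lemma cyc_one_ne {n : ℕ} (hn : 3 ≤ n) : (1 : ZMod n) ≠ 0 := by
  haveI : Fact (1 < n) := ⟨by omega⟩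
  exact one_ne_zero

lemma cyc_adj_succ {n : ℕ} (hn : 3 ≤ n) (k : ZMod n) :
    (cycleGraphZMod n).Adj k (k + 1) := by
  rw [cyc_adj]
  exact ⟨fun h => cyc_one_ne hn (by linear_combination -h), Or.inr (by ring)⟩

/-- reflection x ↦ c - x as a graph automorphism -/
def cycRefl (n : ℕ) (c : ZMod n) : cycleGraphZMod n ≃g cycleGraphZMod n where
  toFun := fun x => c - x
  invFun := fun x => c - x
  left_inv := fun x => by ring
  right_inv := fun x => by ring
  map_rel_iff' := by
    intro a b
    simp only [Equiv.coe_fn_mk, cyc_adj]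
    constructor
    · rintro ⟨h1, h2⟩
      refine ⟨fun h => h1 (by rw [h]), ?_⟩
      rcases h2 with h | h
      · right; linear_combination h
      · left; linear_combination h
    · rintro ⟨h1, h2⟩
      refine ⟨fun h => h1 (by linear_combination -h), ?_⟩
      rcases h2 with h | h
      · right; linear_combination h
      · left; linear_combination h

/-- automorphism fixing a and a+1 is identity -/
lemma cyc_fix_two {n : ℕ} (hn : 3 ≤ n) (φ : cycleGraphZMod n ≃g cycleGraphZMod n)
    (a : ZMod n) (ha : φ a = a) (ha1 : φ (a + 1) = a + 1) : ∀ w, φ w = w := by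
  haveI : NeZero n := ⟨by omega⟩
  have key : ∀ m : ℕ, φ (a + m) = a + m ∧ φ (a + m + 1) = a + m + 1 := by
    intro m
    induction m with
    | zero => simpa using ⟨ha, ha1⟩
    | succ m ih =>
      obtain ⟨h1, h2⟩ := ih
      have hadj : (cycleGraphZMod n).Adj (a + m + 1) (a + m + 1 + 1) :=
        cyc_adj_succ hn (a + m + 1)
      have hadj' : (cycleGraphZMod n).Adj (a + m + 1) (φ (a + m + 1 + 1)) := by
        have := φ.map_rel_iff.2 hadj
        rwa [h2] at this
      rw [cyc_adj] at hadj'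
      obtain ⟨hne, h | h⟩ := hadj'
      · exfalso
        have e1 : φ (a + m + 1 + 1) = a + m := by linear_combination -h
        have e2 := φ.injective (e1.trans h1.symm)
        exact cyc_two_ne hn (by linear_combination e2)
      · have h3 : φ (a + m + 1 + 1) = a + m + 1 + 1 := by linear_combination h
        have hc : ((m + 1 : ℕ) : ZMod n) = (m : ZMod n) + 1 := by push_cast; ring
        constructor
        · rw [hc, ← add_assoc]; exact h2
        · rw [hc, show a + ((m : ZMod n) + 1) + 1 = a + m + 1 + 1 by ring]; exact h3
  intro w
  have hw : w = a + ((w - a).val : ℕ) := by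
    rw [ZMod.natCast_val, ZMod.cast_id]; ring
  rw [hw]
  exact (key (w - a).val).1

lemma cycRefl_apply (n : ℕ) (c x : ZMod n) : cycRefl n c x = c - x := rfl

theorem detIndex_cycleGraph (n : ℕ) (hn : 3 ≤ n) :
    detIndex (cycleGraphZMod n) = 2 := by
  have h1ne := cyc_one_ne hn
  have h2ne := cyc_two_ne hn
  have mem2 : 2 ∈ {k | ∃ T : Finset (Sym2 (ZMod n)), T.card = k ∧
      IsEdgeDetSet (cycleGraphZMod n) ↑T} := by
    refine ⟨{s(0,1), s(1,2)}, ?_, ?_, ?_⟩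
    · rw [Finset.card_pair]
      rw [ne_eq, Sym2.eq_iff]
      rintro (⟨h, -⟩ | ⟨h, -⟩)
      · exact h1ne h.symm
      · exact h2ne (by linear_combination -h)
    · intro e he
      simp only [Finset.coe_insert, Finset.coe_singleton, Set.mem_insert_iff,
        Set.mem_singleton_iff] at he
      rcases he with rfl | rfl
      · rw [SimpleGraph.mem_edgeSet]; simpa using cyc_adj_succ hn 0
      · have := cyc_adj_succ hn 1
        simpa [show (1:ZMod n) + 1 = 2 by ring] using this
    · intro φ hφ
      have e1 := hφ s(0,1) (by simp)
      have e2 := hφ s(1,2) (by simp)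
      rw [Sym2.map_pair_eq, Sym2.eq_iff] at e1 e2
      have hφ1 : φ 1 = 1 := by
        rcases e1 with ⟨-, h⟩ | ⟨-, h⟩
        · exact h
        · exfalso
          rcases e2 with ⟨h', -⟩ | ⟨h', -⟩
          · exact h1ne (by linear_combination -(h.symm.trans h'))
          · exact h2ne (by linear_combination -(h.symm.trans h'))
      have hφ0 : φ 0 = 0 := by
        rcases e1 with ⟨h, -⟩ | ⟨h, -⟩
        · exact h
        · exact absurd (φ.injective (h.trans hφ1.symm)) (fun hh => h1ne hh.symm)
      exact cyc_fix_two hn φ 0 hφ0 (by simpa using hφ1)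
  refine le_antisymm (Nat.sInf_le mem2) (le_csInf ⟨2, mem2⟩ ?_)
  rintro k ⟨T, hcard, hsub, hdet⟩
  by_contra hlt
  push_neg at hlt
  interval_cases k
  · -- T empty
    rw [Finset.card_eq_zero] at hcard
    subst hcard
    have := hdet (cycRefl n 0) (by simp) 1
    rw [cycRefl_apply] at this
    exact h2ne (by linear_combination -this)
  · -- T singleton
    rw [Finset.card_eq_one] at hcard
    obtain ⟨e, rfl⟩ := hcard
    have he : e ∈ (cycleGraphZMod n).edgeSet := hsub (by simp)
    induction e using Sym2.ind with
    | _ i j =>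
      rw [SimpleGraph.mem_edgeSet, cyc_adj] at he
      obtain ⟨hne, hd⟩ := he
      -- in either case, e = s(a, a+1) for some a
      obtain ⟨a, ha⟩ : ∃ a : ZMod n, s(i, j) = s(a, a + 1) := by
        rcases hd with h | h
        · exact ⟨j, by rw [Sym2.eq_iff]; right; exact ⟨by linear_combination h, rfl⟩⟩
        · exact ⟨i, by rw [Sym2.eq_iff]; left; exact ⟨rfl, by linear_combination h⟩⟩
      have key := hdet (cycRefl n (2*a + 1)) ?_ a
      · rw [cycRefl_apply] at key
        exact h1ne (by linear_combination key)
      · intro e' he'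
        simp only [Finset.coe_singleton, Set.mem_singleton_iff] at he'
        subst he'
        rw [ha, Sym2.map_pair_eq, Sym2.eq_iff]
        right
        constructor <;> rw [cycRefl_apply] <;> ring
end

section
/- For all integers n > m > 1, the determining index of the complete bipartite graph K_{n,m} satisfies det'(K_{n,m}) = n - 1. -/
open Sum

/-- Any pair of permutations of the two sides gives an automorphism of the
complete bipartite graph. -/
def sumPermIso {n m : ℕ} (σ : Equiv.Perm (Fin n)) (τ : Equiv.Perm (Fin m)) :
    completeBipartiteGraph (Fin n) (Fin m) ≃g completeBipartiteGraph (Fin n) (Fin m) :=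
  { Equiv.sumCongr σ τ with
    map_rel_iff' := by rintro (a|a) (b|b) <;> simp }

@[simp] lemma sumPermIso_inl {n m : ℕ} (σ : Equiv.Perm (Fin n)) (τ : Equiv.Perm (Fin m))
    (i : Fin n) : sumPermIso σ τ (inl i) = inl (σ i) := rfl

@[simp] lemma sumPermIso_inr {n m : ℕ} (σ : Equiv.Perm (Fin n)) (τ : Equiv.Perm (Fin m))
    (j : Fin m) : sumPermIso σ τ (inr j) = inr (τ j) := rfl

/-- When the parts have different sizes, every automorphism of the complete bipartite
graph preserves the parts. -/
lemma preserve {n m : ℕ} (hm : 1 < m) (hnm : m < n)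
    (φ : completeBipartiteGraph (Fin n) (Fin m) ≃g completeBipartiteGraph (Fin n) (Fin m)) :
    (∀ i, ∃ i', φ (inl i) = inl i') ∧ (∀ j, ∃ j', φ (inr j) = inr j') := by
  have hn : 1 < n := hm.trans hnm
  have nonadj : ∀ x y : Fin n ⊕ Fin m,
      ¬ (completeBipartiteGraph (Fin n) (Fin m)).Adj x y → x.isLeft = y.isLeft := by
    rintro (a|a) (b|b) h <;> simp at h ⊢
  have sameL : ∀ i i' : Fin n, (φ (inl i)).isLeft = (φ (inl i')).isLeft := by
    intro i i'
    rcases eq_or_ne i i' with rfl | h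
    · rfl
    · apply nonadj
      rw [φ.map_adj_iff]
      simp
  have sameR : ∀ j j' : Fin m, (φ (inr j)).isLeft = (φ (inr j')).isLeft := by
    intro j j'
    rcases eq_or_ne j j' with rfl | h
    · rfl
    · apply nonadj
      rw [φ.map_adj_iff]
      simp
  have hL : ∀ i, ∃ i', φ (inl i) = inl i' := by
    by_contra hc
    push_neg at hc
    obtain ⟨i0, hi0⟩ := hc
    have hR0 : (φ (inl i0)).isLeft = false := by
      cases h : φ (inl i0) with
      | inl a => exact absurd h (hi0 a)
      | inr b => rfl
    have hall : ∀ i, ∃ j, φ (inl i) = inr j := by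
      intro i
      have := (sameL i i0).trans hR0
      cases h : φ (inl i) with
      | inl a => rw [h] at this; simp at this
      | inr b => exact ⟨b, rfl⟩
    choose f hf using hall
    have hinj : Function.Injective f := by
      intro a b hab
      have : φ (inl a) = φ (inl b) := by rw [hf a, hf b, hab]
      simpa using φ.toEquiv.injective this
    have := Fintype.card_le_of_injective f hinj
    simp at this
    omega
  refine ⟨hL, ?_⟩
  by_contra hc
  push_neg at hc
  obtain ⟨j0, hj0⟩ := hc
  have hL0 : (φ (inr j0)).isLeft = true := by
    cases h : φ (inr j0) with
    | inl a => rfl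
    | inr b => exact absurd h (hj0 b)
  have hall : ∀ j, ∃ i, φ (inr j) = inl i := by
    intro j
    have := (sameR j j0).trans hL0
    cases h : φ (inr j) with
    | inl a => exact ⟨a, rfl⟩
    | inr b => rw [h] at this; simp at this
  choose f hf using hL
  choose g hg using hall
  have hinj : Function.Injective f := by
    intro a b hab
    have : φ (inl a) = φ (inl b) := by rw [hf a, hf b, hab]
    simpa using φ.toEquiv.injective this
  have hsurj : Function.Surjective f := Finite.surjective_of_injective hinj
  obtain ⟨i, hi⟩ := hsurj (g j0)
  have : φ (inr j0) = φ (inl i) := by rw [hf i, hg j0, hi]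
  exact absurd (φ.toEquiv.injective this) (by simp)

/-- Lower bound: any edge determining set of `K_{n,m}` has at least `n - 1` edges. -/
lemma lower_bound {n m : ℕ} (T : Finset (Sym2 (Fin n ⊕ Fin m)))
    (hT : IsEdgeDetSet (completeBipartiteGraph (Fin n) (Fin m)) ↑T) :
    n - 1 ≤ T.card := by
  classical
  by_contra h
  push_neg at h
  set A : Finset (Fin n) := T.biUnion (fun e => Finset.univ.filter (fun i => inl i ∈ e)) with hA
  have hcardA : A.card ≤ T.card := by
    calc A.card ≤ ∑ e ∈ T, (Finset.univ.filter (fun i => inl i ∈ e)).card :=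
          Finset.card_biUnion_le
      _ ≤ ∑ _e ∈ T, 1 := by
          apply Finset.sum_le_sum
          intro e he
          have hedge : e ∈ (completeBipartiteGraph (Fin n) (Fin m)).edgeSet := hT.1 he
          induction e with
          | h x y =>
            rcases x with a | a <;> rcases y with b | b <;>
              simp only [SimpleGraph.mem_edgeSet, completeBipartiteGraph_adj] at hedge <;>
              simp at hedge ⊢
            · exact Finset.card_le_one.mpr (by intro i hi j hj; simp at hi hj; omega)
            · exact Finset.card_le_one.mpr (by intro i hi j hj; simp at hi hj; omega)
      _ = T.card := by simp
  have hcompl : 1 < Aᶜ.card := by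
    have := Finset.card_compl A
    simp at this
    omega
  obtain ⟨a, ha, b, hb, hab⟩ := Finset.one_lt_card.mp hcompl
  have haA : a ∉ A := by simpa using ha
  have hbA : b ∉ A := by simpa using hb
  set φ := sumPermIso (Equiv.swap a b) (1 : Equiv.Perm (Fin m)) with hφ
  have hfix : ∀ e ∈ (↑T : Set (Sym2 (Fin n ⊕ Fin m))), Sym2.map φ e = e := by
    intro e he
    have heT : e ∈ T := he
    have hedge : e ∈ (completeBipartiteGraph (Fin n) (Fin m)).edgeSet := hT.1 he
    have key : ∀ i : Fin n, inl i ∈ e → φ (inl i) = inl i := by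
      intro i hi
      have hiA : i ∈ A := by
        rw [hA]
        simp only [Finset.mem_biUnion]
        exact ⟨e, heT, by simp [hi]⟩
      have hia : i ≠ a := fun h => haA (h ▸ hiA)
      have hib : i ≠ b := fun h => hbA (h ▸ hiA)
      rw [hφ, sumPermIso_inl, Equiv.swap_apply_of_ne_of_ne hia hib]
    have keyR : ∀ j : Fin m, φ (inr j) = inr j := by
      intro j; rw [hφ, sumPermIso_inr]; rfl
    induction e with
    | h x y =>
      rw [Sym2.map_pair_eq]
      rcases x with i | j <;> rcases y with i' | j' <;>
        simp only [SimpleGraph.mem_edgeSet, completeBipartiteGraph_adj] at hedge <;>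
        simp at hedge
      · rw [key i (by simp), keyR j']
      · rw [key i' (by simp), keyR j]
  have := hT.2 φ hfix (inl a)
  rw [hφ, sumPermIso_inl, Equiv.swap_apply_left] at this
  simp at this
  exact hab this.symm

/-- Upper bound: an explicit edge determining set of `K_{n,m}` of size `n - 1`. -/
lemma upper_bound {n m : ℕ} (hm : 1 < m) (hnm : m < n) :
    ∃ T : Finset (Sym2 (Fin n ⊕ Fin m)), T.card = n - 1 ∧
      IsEdgeDetSet (completeBipartiteGraph (Fin n) (Fin m)) ↑T := by
  classical
  have hm0 : 0 < m := by omega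
  set lft : Fin (n-1) → Fin n := fun i => ⟨i.val, by omega⟩ with hlft
  set rgt : Fin (n-1) → Fin m := fun i => ⟨min i.val (m-1), by omega⟩ with hrgt
  set f : Fin (n-1) → Sym2 (Fin n ⊕ Fin m) := fun i => s(inl (lft i), inr (rgt i)) with hf
  have hfinj : Function.Injective f := by
    intro i j hij
    rw [hf] at hij
    simp only [Sym2.eq_iff] at hij
    rcases hij with ⟨h1, _⟩ | ⟨h1, _⟩
    · simp only [inl.injEq, hlft, Fin.mk.injEq] at h1
      exact Fin.ext h1
    · simp at h1
  refine ⟨Finset.image f Finset.univ, ?_, ?_, ?_⟩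
  · rw [Finset.card_image_of_injective _ hfinj, Finset.card_univ, Fintype.card_fin]
  · intro e he
    simp only [Finset.coe_image, Set.mem_image] at he
    obtain ⟨i, _, rfl⟩ := he
    simp [hf]
  · intro φ hφ
    obtain ⟨hL, hR⟩ := preserve hm hnm φ
    have hfix : ∀ i : Fin (n-1), φ (inl (lft i)) = inl (lft i) ∧ φ (inr (rgt i)) = inr (rgt i) := by
      intro i
      have he : f i ∈ (↑(Finset.image f Finset.univ) : Set (Sym2 (Fin n ⊕ Fin m))) := by
        simp
      have := hφ (f i) he
      rw [hf] at this
      simp only [Sym2.map_pair_eq, Sym2.eq_iff] at this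
      rcases this with ⟨h1, h2⟩ | ⟨h1, h2⟩
      · exact ⟨h1, h2⟩
      · obtain ⟨i', hi'⟩ := hL (lft i)
        rw [hi'] at h1
        simp at h1
    have hfixL : ∀ i : Fin n, i.val < n - 1 → φ (inl i) = inl i := by
      intro i hi
      have := (hfix ⟨i.val, hi⟩).1
      have hli : lft ⟨i.val, hi⟩ = i := Fin.ext rfl
      rwa [hli] at this
    have hfixR : ∀ j : Fin m, φ (inr j) = inr j := by
      intro j
      have hj : j.val < n - 1 := by omega
      have := (hfix ⟨j.val, hj⟩).2
      have hrj : rgt ⟨j.val, hj⟩ = j := by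
        rw [hrgt]
        apply Fin.ext
        simp
        omega
      rwa [hrj] at this
    set lst : Fin n := ⟨n-1, by omega⟩ with hlst
    have hlstval : lst.val = n - 1 := rfl
    have hlast : φ (inl lst) = inl lst := by
      obtain ⟨i', hi'⟩ := hL lst
      rcases lt_or_ge i'.val (n-1) with hlt | hge
      · have h2 := hfixL i' hlt
        have heq : φ (inl lst) = φ (inl i') := by rw [hi', h2]
        have := φ.toEquiv.injective heq
        simp only [inl.injEq] at this
        have : lst.val = i'.val := by rw [this]
        omega
      · have : i' = lst := Fin.ext (by omega)
        rw [hi', this]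
    intro w
    rcases w with i | j
    · rcases lt_or_ge i.val (n-1) with hlt | hge
      · exact hfixL i hlt
      · have : i = lst := Fin.ext (by omega)
        rw [this]; exact hlast
    · exact hfixR j

theorem detIndex_completeBipartite (n m : ℕ) (hm : 1 < m) (hnm : m < n) :
    detIndex (completeBipartiteGraph (Fin n) (Fin m)) = n - 1 := by
  obtain ⟨T, hc, hd⟩ := upper_bound hm hnm
  have hmem : n - 1 ∈ {k | ∃ T : Finset (Sym2 (Fin n ⊕ Fin m)), T.card = k ∧
      IsEdgeDetSet (completeBipartiteGraph (Fin n) (Fin m)) ↑T} := ⟨T, hc, hd⟩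
  refine le_antisymm (Nat.sInf_le hmem) ?_
  obtain ⟨T', hc', hd'⟩ := Nat.sInf_mem (⟨n - 1, hmem⟩ : Set.Nonempty _)
  rw [detIndex, ← hc']
  exact lower_bound T' hd'
end

section
/- For every integer n > 1, the determining index of the complete bipartite graph K_{n,n} satisfies det'(K_{n,n}) = n. -/
/-! An edge of `K_{n,n}` is `s(inl a, inr b)`, so a set of edges is a set `P` of pairs.
If `|P| < n`, either two left (or two right) vertices are missed by `P`, and exchanging them fixes
every edge of `P`; or `P` is a matching of size `n - 1`, which extends to a perfect matching `σ`,
and exchanging the two sides along `σ` fixes every edge of `P`.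
Conversely, take the edges `s(inl a, inr (g a))` for a map `g` with `g a₀ = g a₁`, `a₀ ≠ a₁`, that
misses a single value. An automorphism fixing them cannot exchange the sides, as `inl a₀` and
`inl a₁` would both go to `inr (g a₀)`; so it fixes every left vertex, every right vertex in the
range of `g`, and hence the last one too. -/

open Function Finset Sum SimpleGraph

variable {α β : Type*}

theorem Function.Injective.eq_id_of_eqOn_compl {f : α → α} (hf : Injective f) {s : Set α}
    (hs : s.Subsingleton) (h : Set.EqOn f id sᶜ) : f = id := by
  funext x
  by_contra hx
  have hxs : x ∈ s := by_contra fun hxs => hx (h hxs)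
  have hfxs : f x ∉ s := fun hfxs => hx (hs hfxs hxs)
  exact hx (hf (h hfxs))

theorem Fintype.card_le_card_add_one_of_forall_perm_eq_one [Fintype α]
    {s : Finset α} (h : ∀ σ : Equiv.Perm α, (∀ a ∈ s, σ a = a) → σ = 1) :
    Fintype.card α ≤ #s + 1 := by
  classical
  by_contra! hs
  obtain ⟨a, ha, b, hb, hab⟩ := Finset.one_lt_card.mp (by rw [card_compl]; omega : 1 < #sᶜ)
  rw [mem_compl] at ha hb
  have := h (Equiv.swap a b) fun c hc =>
    Equiv.swap_apply_of_ne_of_ne (ne_of_mem_of_not_mem hc ha) (ne_of_mem_of_not_mem hc hb)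
  exact hab (by simpa using congr($this a).symm)

theorem completeBipartiteGraph_adj_iff_isLeft_ne {v w : α ⊕ β} :
    (completeBipartiteGraph α β).Adj v w ↔ v.isLeft ≠ w.isLeft := by
  cases v <;> cases w <;> simp

theorem completeBipartiteGraph_iso_isLeft_eq_iff (φ : completeBipartiteGraph α β ≃g completeBipartiteGraph α β)
    {v w : α ⊕ β} : (φ v).isLeft = (φ w).isLeft ↔ v.isLeft = w.isLeft := by
  have := φ.map_adj_iff (v := v) (w := w)
  rwa [completeBipartiteGraph_adj_iff_isLeft_ne, completeBipartiteGraph_adj_iff_isLeft_ne, not_iff_not] at this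

def completeBipartiteGraphComm : completeBipartiteGraph α β ≃g completeBipartiteGraph β α where
  toEquiv := Equiv.sumComm α β
  map_rel_iff' := by rintro (a | b) (a' | b') <;> simp

def crossEdge (p : α × β) : Sym2 (α ⊕ β) := s(inl p.1, inr p.2)

theorem crossEdge_injective : Injective (crossEdge : α × β → Sym2 (α ⊕ β)) := by
  rintro ⟨a, b⟩ ⟨a', b'⟩ h
  simpa [crossEdge] using h

theorem edgeSet_completeBipartiteGraph_eq_range :
    (completeBipartiteGraph α β).edgeSet = Set.range crossEdge :=
  SimpleGraph.edgeSet_completeBipartiteGraph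

theorem eq_one_of_isEdgeDetSet_image_crossEdge {P : Set (α × β)}
    (hP : IsEdgeDetSet (completeBipartiteGraph α β) (crossEdge '' P))
    {σ : Equiv.Perm α} {τ : Equiv.Perm β} (h : ∀ p ∈ P, σ p.1 = p.1 ∧ τ p.2 = p.2) :
    σ = 1 ∧ τ = 1 := by
  have hfix := hP.2 (completeBipartiteGraphCongr σ τ) <| by
    rintro _ ⟨p, hp, rfl⟩
    simp [crossEdge, h p hp]
  exact ⟨Equiv.ext fun a => inl_injective (hfix (inl a)),
    Equiv.ext fun b => inr_injective (hfix (inr b))⟩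

theorem not_isEdgeDetSet_image_crossEdge_of_injOn [Nonempty α] {P : Finset (α × α)}
    (hfst : Set.InjOn Prod.fst (P : Set (α × α))) (hsnd : Set.InjOn Prod.snd (P : Set (α × α))) :
    ¬ IsEdgeDetSet (completeBipartiteGraph α α) (crossEdge '' P) := by
  intro hP
  obtain ⟨σ, hσ⟩ := Equiv.Perm.exists_extending_pair (fun p : P => p.1.1) (fun p : P => p.1.2)
    (fun p q h => Subtype.ext (hfst p.2 q.2 h)) (fun p q h => Subtype.ext (hsnd p.2 q.2 h))
  let φ := (completeBipartiteGraphCongr σ σ.symm).trans completeBipartiteGraphComm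
  have hfix := hP.2 φ <| by
    rintro _ ⟨p, hp, rfl⟩
    have h : σ p.1 = p.2 := hσ ⟨p, hp⟩
    simp [φ, crossEdge, completeBipartiteGraphComm, h, σ.symm_apply_eq.mpr h.symm]
  exact inr_ne_inl (hfix (inl (Classical.arbitrary α)))

theorem isEdgeDetSet_range_crossEdge_graph {g : α → β} (hg : ¬ Injective g)
    (hrange : (Set.range g)ᶜ.Subsingleton) :
    IsEdgeDetSet (completeBipartiteGraph α β) (Set.range fun a => crossEdge (a, g a)) := by
  refine ⟨?_, fun φ hfix => ?_⟩
  · rw [edgeSet_completeBipartiteGraph_eq_range]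
    exact Set.range_comp_subset_range (fun a => (a, g a)) crossEdge
  have hedge (a : α) : s(φ (inl a), φ (inr (g a))) = s(inl a, inr (g a)) := hfix _ ⟨a, rfl⟩
  have hleft (a : α) : φ (inl a) = inl a ∨ φ (inl a) = inr (g a) := by
    rcases Sym2.eq_iff.mp (hedge a) with h | h
    exacts [.inl h.1, .inr h.1]
  obtain ⟨a, a', hgaa', haa'⟩ : ∃ a a', g a = g a' ∧ a ≠ a' := by
    simpa [Injective] using hg
  -- `φ (inl a)` and `φ (inl a')` lie on a common side, and cannot both be `inr (g a)`
  have hside (c : α) : (φ (inl c)).isLeft := by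
    rw [completeBipartiteGraph_iso_isLeft_eq_iff φ (v := inl c) (w := inl a) |>.mpr rfl]
    rcases hleft a with h | h
    · simp [h]
    rcases hleft a' with h' | h'
    · simpa [h, h'] using completeBipartiteGraph_iso_isLeft_eq_iff φ (v := inl a) (w := inl a')
    · exact absurd (φ.injective (h.trans (hgaa' ▸ h'.symm))) (by simpa using haa')
  have hfixl (c : α) : φ (inl c) = inl c :=
    (hleft c).resolve_right fun h => by simpa [h] using hside c
  have hfixr (c : α) : φ (inr (g c)) = inr (g c) := Sym2.congr_right.mp (hfixl c ▸ hedge c)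
  refine congrFun (φ.injective.eq_id_of_eqOn_compl (hrange.image inr) ?_)
  rintro (c | b) hb
  · exact hfixl c
  · obtain ⟨c, rfl⟩ : b ∈ Set.range g := by_contra fun h => hb ⟨b, h, rfl⟩
    exact hfixr c

variable [Fintype α]

theorem card_le_card_of_isEdgeDetSet_image_crossEdge {P : Finset (α × α)}
    (hP : IsEdgeDetSet (completeBipartiteGraph α α) (crossEdge '' P)) :
    Fintype.card α ≤ #P := by
  classical
  by_contra! hlt
  have hfst : Fintype.card α ≤ #(P.image Prod.fst) + 1 :=
    Fintype.card_le_card_add_one_of_forall_perm_eq_one fun σ hσ =>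
      (eq_one_of_isEdgeDetSet_image_crossEdge (τ := 1) hP fun p hp =>
        ⟨hσ _ (mem_image_of_mem _ hp), rfl⟩).1
  have hsnd : Fintype.card α ≤ #(P.image Prod.snd) + 1 :=
    Fintype.card_le_card_add_one_of_forall_perm_eq_one fun τ hτ =>
      (eq_one_of_isEdgeDetSet_image_crossEdge (σ := 1) hP fun p hp =>
        ⟨rfl, hτ _ (mem_image_of_mem _ hp)⟩).2
  have : Nonempty α := Fintype.card_pos_iff.mp (by omega)
  refine not_isEdgeDetSet_image_crossEdge_of_injOn ?_ ?_ hP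
  · exact card_image_iff.mp (le_antisymm card_image_le (by omega))
  · exact card_image_iff.mp (le_antisymm card_image_le (by omega))

theorem card_le_card_of_isEdgeDetSet {T : Finset (Sym2 (α ⊕ α))}
    (hT : IsEdgeDetSet (completeBipartiteGraph α α) T) : Fintype.card α ≤ #T := by
  classical
  have hsub := hT.1
  rw [edgeSet_completeBipartiteGraph_eq_range, ← Set.image_univ] at hsub
  obtain ⟨P, -, rfl⟩ := subset_set_image_iff.mp hsub
  rw [card_image_of_injective _ crossEdge_injective]
  exact card_le_card_of_isEdgeDetSet_image_crossEdge (by rwa [coe_image] at hT)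

theorem exists_isEdgeDetSet_card_eq [Nontrivial α] : ∃ T : Finset (Sym2 (α ⊕ α)),
    #T = Fintype.card α ∧ IsEdgeDetSet (completeBipartiteGraph α α) T := by
  classical
  obtain ⟨a₀, a₁, hne⟩ := exists_pair_ne α
  let g := update id a₀ a₁
  have hg : ¬ Injective g := fun h => hne (h (by simp [g, hne.symm]))
  have hrange : (Set.range g)ᶜ.Subsingleton :=
    (Set.subsingleton_singleton (a := a₀)).anti fun b hb =>
      by_contra fun h => hb ⟨b, update_of_ne h _ _⟩
  refine ⟨univ.image fun a => crossEdge (a, g a), ?_, ?_⟩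
  · refine (card_image_of_injective _ fun a a' h => ?_).trans card_univ
    exact congrArg Prod.fst (crossEdge_injective h)
  · simpa using isEdgeDetSet_range_crossEdge_graph hg hrange

theorem detIndex_completeBipartiteGraph_self [Nontrivial α] :
    detIndex (completeBipartiteGraph α α) = Fintype.card α := by
  obtain ⟨T, hcard, hT⟩ := exists_isEdgeDetSet_card_eq (α := α)
  refine le_antisymm (Nat.sInf_le ⟨T, hcard, hT⟩) (le_csInf ⟨_, T, hcard, hT⟩ ?_)
  rintro _ ⟨T', rfl, hT'⟩
  exact card_le_card_of_isEdgeDetSet hT'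

theorem detIndex_completeBipartite_eq (n : ℕ) (hn : 1 < n) :
    detIndex (completeBipartiteGraph (Fin n) (Fin n)) = n := by
  have : Nontrivial (Fin n) := Fin.nontrivial_iff_two_le.mpr hn
  simpa using detIndex_completeBipartiteGraph_self (α := Fin n)
end

section
/- For every integer n > 2, the determining index of the complete graph K_n satisfies det'(K_n) = ⌊2n/3⌋. -/
/-!
Automorphisms of `K_n` are all permutations, and a transposition `(u v)` maps every edge `e`
with `u ∈ e ↔ v ∈ e` to itself. Hence an edge determining set `T` covers all vertices but at
most one, and no edge of `T` has both endpoints of `T`-degree one. Let each edge of `T` pay `2`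
to an endpoint of degree one and `1` to any other endpoint: every covered vertex receives at
least `2` and every edge pays at most `3`, so `3 |T| ≥ 2 (n - 1)`, i.e. `|T| ≥ ⌊2n/3⌋`.

Conversely, take the paths `3m, 3m+1, 3m+2` for `m < n / 3`, the last one extended by the edge
`{n-3, n-2}` when `n ≡ 2 mod 3`. A permutation fixing both edges of a path on three vertices
fixes its middle vertex, hence its ends; this fixes every vertex but the last, which is then
fixed as well.
-/

open Finset Function SimpleGraph

namespace Sym2

variable {α : Type*} {f : α → α} {a b c : α}

lemma map_swap_eq_self [DecidableEq α] {u v : α} {e : Sym2 α} (h : u ∈ e ↔ v ∈ e) :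
    e.map (Equiv.swap u v) = e := by
  by_cases hu : u ∈ e
  · obtain rfl | huv := eq_or_ne u v
    · simp
    obtain rfl := (mem_and_mem_iff huv).1 ⟨hu, h.1 hu⟩
    simp [map_mk, eq_swap]
  · have hv : v ∉ e := mt h.2 hu
    refine (map_congr fun x hx => ?_).trans (congrFun map_id e)
    exact Equiv.swap_apply_of_ne_of_ne (ne_of_mem_of_not_mem hx hu) (ne_of_mem_of_not_mem hx hv)

lemma isFixedPt_right_of_map_eq_self (ha : IsFixedPt f a) (h : s(a, b).map f = s(a, b)) :
    IsFixedPt f b := by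
  rw [map_mk, ha.eq, Sym2.congr_right] at h
  exact h

lemma isFixedPt_of_map_eq_self_of_map_eq_self (hac : a ≠ c) (h₁ : s(a, b).map f = s(a, b))
    (h₂ : s(b, c).map f = s(b, c)) : IsFixedPt f b := by
  rw [map_mk, Sym2.eq_iff] at h₁ h₂
  by_contra hb
  have : f b = a := by tauto
  have : f b = c := by tauto
  exact hac (by simp_all)

end Sym2

lemma Function.Injective.isFixedPt_of_forall_ne {α : Type*} {f : α → α} (hf : Injective f)
    {v : α} (h : ∀ w, w ≠ v → IsFixedPt f w) : IsFixedPt f v := by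
  by_contra hv
  exact hv (hf (h (f v) hv))

lemma IsEdgeDetSet.exists_mem_not_iff {V : Type*} {T : Set (Sym2 V)}
    (hT : IsEdgeDetSet (⊤ : SimpleGraph V) T) {u v : V} (huv : u ≠ v) :
    ∃ e ∈ T, ¬(u ∈ e ↔ v ∈ e) := by
  classical
  by_contra! h
  have hu : Equiv.swap u v u = u :=
    hT.2 (Iso.completeGraph (Equiv.swap u v)) (fun e he => Sym2.map_swap_eq_self (h e he)) u
  exact huv ((Equiv.swap_apply_left u v).symm.trans hu).symm

section LowerBound

variable {V : Type*} [DecidableEq V] {T : Finset (Sym2 V)}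

def edgeDegree (T : Finset (Sym2 V)) (v : V) : ℕ := #{e ∈ T | v ∈ e}

lemma sum_edgeDegree_mul [Fintype V] (T : Finset (Sym2 V)) (g : V → ℕ) :
    ∑ v, edgeDegree T v * g v = ∑ e ∈ T, ∑ v with v ∈ e, g v := by
  simp only [edgeDegree, card_filter, sum_mul, sum_filter, ite_mul, one_mul, zero_mul]
  exact sum_comm

lemma sum_filter_mem_mk [Fintype V] {a b : V} (hab : a ≠ b) (g : V → ℕ) :
    ∑ v with v ∈ s(a, b), g v = g a + g b := by
  rw [← sum_pair hab]
  congr 1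
  ext v
  simp [Sym2.mem_iff]

lemma IsEdgeDetSet.card_edgeDegree_eq_zero_le_one [Fintype V]
    (hT : IsEdgeDetSet (⊤ : SimpleGraph V) (T : Set (Sym2 V))) :
    #{v | edgeDegree T v = 0} ≤ 1 := by
  refine card_le_one.2 fun u hu v hv => ?_
  by_contra huv
  obtain ⟨e, he, hne⟩ := hT.exists_mem_not_iff huv
  simp only [edgeDegree, mem_filter, mem_univ, true_and, card_eq_zero, filter_eq_empty_iff]
    at hu hv
  exact hne (iff_of_false (hu he) (hv he))

lemma IsEdgeDetSet.not_edgeDegree_eq_one_and_eq_one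
    (hT : IsEdgeDetSet (⊤ : SimpleGraph V) (T : Set (Sym2 V))) {a b : V} (hab : s(a, b) ∈ T) :
    ¬(edgeDegree T a = 1 ∧ edgeDegree T b = 1) := by
  rintro ⟨ha, hb⟩
  have hab' : a ≠ b := by simpa using hT.1 hab
  obtain ⟨e, he, hne⟩ := hT.exists_mem_not_iff hab'
  have unique : ∀ x, edgeDegree T x = 1 → x ∈ s(a, b) → x ∈ e → e = s(a, b) :=
    fun x hx hxab hxe =>
      card_le_one.1 hx.le e (by simp [mem_coe.1 he, hxe]) _ (by simp [hab, hxab])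
  have : a ∈ e ∨ b ∈ e := by tauto
  rcases this with h | h
  · exact hne (by simp [unique a ha (Sym2.mem_mk_left a b) h])
  · exact hne (by simp [unique b hb (Sym2.mem_mk_right a b) h])

theorem IsEdgeDetSet.two_mul_card_sub_one_le [Fintype V]
    (hT : IsEdgeDetSet (⊤ : SimpleGraph V) (T : Set (Sym2 V))) :
    2 * (Fintype.card V - 1) ≤ 3 * #T := by
  set g : V → ℕ := fun v => if edgeDegree T v = 1 then 2 else 1
  have hedge : ∀ e ∈ T, ∑ v with v ∈ e, g v ≤ 3 := by
    intro e he
    induction e with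
    | h a b =>
      rw [sum_filter_mem_mk (by simpa using hT.1 he)]
      have := hT.not_edgeDegree_eq_one_and_eq_one he
      simp only [g]
      split_ifs <;> omega
  have hvertex : ∀ v, edgeDegree T v ≠ 0 → 2 ≤ edgeDegree T v * g v := by
    intro v hv
    simp only [g]
    split_ifs <;> omega
  have hsplit := card_filter_add_card_filter_not (s := univ) (fun v => edgeDegree T v = 0)
  have hisolated := hT.card_edgeDegree_eq_zero_le_one
  simp only [card_univ, ← ne_eq] at hsplit
  calc 2 * (Fintype.card V - 1) ≤ ∑ v with edgeDegree T v ≠ 0, 2 := by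
        rw [sum_const, smul_eq_mul]; omega
    _ ≤ ∑ v with edgeDegree T v ≠ 0, edgeDegree T v * g v :=
        sum_le_sum fun v hv => hvertex v (mem_filter.1 hv).2
    _ ≤ ∑ v, edgeDegree T v * g v := sum_le_sum_of_subset (filter_subset _ _)
    _ = ∑ e ∈ T, ∑ v with v ∈ e, g v := sum_edgeDegree_mul T g
    _ ≤ ∑ e ∈ T, 3 := sum_le_sum hedge
    _ = 3 * #T := by rw [sum_const, smul_eq_mul, mul_comm]

end LowerBound

section UpperBound

open Fin.NatCast

lemma Fin.natCast_inj_of_lt {n : ℕ} [NeZero n] {a b : ℕ} (ha : a < n) (hb : b < n) :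
    (a : Fin n) = b ↔ a = b := by
  rw [Fin.ext_iff, Fin.val_cast_of_lt ha, Fin.val_cast_of_lt hb]

def pathEdge (n : ℕ) [NeZero n] (i : ℕ) : Sym2 (Fin n) :=
  s((i : Fin n), ((i + 1 : ℕ) : Fin n))

lemma pathEdge_mem_edgeSet {n i : ℕ} [NeZero n] (hi : i + 1 < n) :
    pathEdge n i ∈ (⊤ : SimpleGraph (Fin n)).edgeSet := by
  rw [pathEdge, mem_edgeSet, top_adj, Ne, Fin.natCast_inj_of_lt (by omega) hi]
  omega

lemma pathEdge_injOn {n : ℕ} [NeZero n] : Set.InjOn (pathEdge n) {i | i + 1 < n} := by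
  intro i hi j hj h
  simp only [Set.mem_ofPred_eq] at hi hj
  rw [pathEdge, pathEdge, Sym2.eq_iff, Fin.natCast_inj_of_lt (by omega) (by omega),
    Fin.natCast_inj_of_lt hi hj, Fin.natCast_inj_of_lt (by omega) hj,
    Fin.natCast_inj_of_lt hi (by omega)] at h
  omega

-- `j ↦ j + j / 2` enumerates `0, 1, 3, 4, 6, 7, …`, the left ends of the edges of the paths
-- `3m, 3m+1, 3m+2`.
def detIndices (n : ℕ) : Finset ℕ :=
  (range (2 * (n / 3))).image (fun j => j + j / 2) ∪ if n % 3 = 2 then {n - 3} else ∅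

lemma mem_detIndices {n i : ℕ} :
    i ∈ detIndices n ↔ i < 3 * (n / 3) ∧ i % 3 ≠ 2 ∨ n % 3 = 2 ∧ i = n - 3 := by
  simp only [detIndices, mem_union, mem_image, mem_range]
  refine or_congr ⟨fun ⟨j, hj, hji⟩ => by omega,
    fun hi => ⟨i - i / 3, by omega, by omega⟩⟩ ?_
  split_ifs <;> simp [*]

lemma card_detIndices (n : ℕ) : #(detIndices n) = 2 * n / 3 := by
  rw [detIndices, card_union_of_disjoint, card_image_of_injective _ fun a b h => by omega,
    card_range]
  · split_ifs <;> simp <;> omega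
  · refine disjoint_right.2 fun i hi hi' => ?_
    obtain ⟨j, hj, rfl⟩ := mem_image.1 hi'
    split_ifs at hi
    · rw [mem_singleton] at hi
      rw [mem_range] at hj
      omega
    · simp at hi

lemma isFixedPt_of_forall_detIndices {n : ℕ} [NeZero n] (hn : n ≠ 2) {f : Fin n → Fin n}
    (hf : ∀ i ∈ detIndices n, (pathEdge n i).map f = pathEdge n i) {i : ℕ} (hi : i + 1 < n) :
    IsFixedPt f i := by
  have hblock : ∀ k < 3 * (n / 3), IsFixedPt f k := by
    intro k hk
    set m := k / 3
    have h₁ := hf (3 * m) (mem_detIndices.2 (by omega))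
    have h₂ := hf (3 * m + 1) (mem_detIndices.2 (by omega))
    rw [pathEdge] at h₁ h₂
    have hb := Sym2.isFixedPt_of_map_eq_self_of_map_eq_self
      (by rw [Ne, Fin.natCast_inj_of_lt (by omega) (by omega)]; omega) h₁ h₂
    obtain h | h | h : k = 3 * m ∨ k = 3 * m + 1 ∨ k = 3 * m + 1 + 1 := by omega
    · rw [Sym2.eq_swap] at h₁
      exact h ▸ Sym2.isFixedPt_right_of_map_eq_self hb h₁
    · exact h ▸ hb
    · exact h ▸ Sym2.isFixedPt_right_of_map_eq_self hb h₂
  by_cases hi' : i < 3 * (n / 3)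
  · exact hblock i hi'
  · have h := hf (n - 3) (mem_detIndices.2 (by omega))
    rw [pathEdge, show n - 3 + 1 = i by omega] at h
    exact Sym2.isFixedPt_right_of_map_eq_self (hblock _ (by omega)) h

def detEdges (n : ℕ) [NeZero n] : Finset (Sym2 (Fin n)) := (detIndices n).image (pathEdge n)

lemma card_detEdges (n : ℕ) [NeZero n] : #(detEdges n) = 2 * n / 3 := by
  rw [detEdges, card_image_of_injOn (pathEdge_injOn.mono fun i hi => ?_), card_detIndices]
  have := mem_detIndices.1 hi
  simp only [Set.mem_ofPred_eq]
  omega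

lemma isEdgeDetSet_detEdges {n : ℕ} [NeZero n] (hn : n ≠ 2) :
    IsEdgeDetSet (⊤ : SimpleGraph (Fin n)) ↑(detEdges n) := by
  refine ⟨?_, fun φ hφ => ?_⟩
  · intro e he
    obtain ⟨i, hi, rfl⟩ := mem_image.1 (mem_coe.1 he)
    have := mem_detIndices.1 hi
    exact pathEdge_mem_edgeSet (by omega)
  · have hφ' : ∀ i ∈ detIndices n, (pathEdge n i).map φ = pathEdge n i :=
      fun i hi => hφ _ (mem_coe.2 (mem_image_of_mem _ hi))
    have hfix_of_ne_last : ∀ w : Fin n, w ≠ ((n - 1 : ℕ) : Fin n) → IsFixedPt φ w := by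
      intro w hw
      have hw' : (w : ℕ) ≠ n - 1 := fun h =>
        hw (Fin.ext (by rw [h, Fin.val_cast_of_lt (by omega)]))
      simpa using isFixedPt_of_forall_detIndices hn hφ' (i := w) (by omega)
    intro w
    by_cases hw : w = ((n - 1 : ℕ) : Fin n)
    · exact hw ▸ φ.injective.isFixedPt_of_forall_ne hfix_of_ne_last
    · exact hfix_of_ne_last w hw

end UpperBound

theorem detIndex_completeGraph (n : ℕ) (hn : 2 < n) :
    detIndex (⊤ : SimpleGraph (Fin n)) = 2 * n / 3 := by
  have : NeZero n := ⟨by omega⟩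
  refine le_antisymm (Nat.sInf_le ⟨_, card_detEdges n, isEdgeDetSet_detEdges hn.ne'⟩) ?_
  refine le_csInf ⟨_, _, card_detEdges n, isEdgeDetSet_detEdges hn.ne'⟩ ?_
  rintro k ⟨T, rfl, hT⟩
  have := hT.two_mul_card_sub_one_le
  rw [Fintype.card_fin] at this
  omega
end

section
/- For every positive integer n, let G be the join N_{n+1} + K_{n+1} of the empty graph on n+1 vertices with the complete graph on n+1 vertices; that is, the vertex set of G is the disjoint union of a set U of size n+1 and a set V of size n+1, any two distinct vertices of V are adjacent, every vertex of U is adjacent to every vertex of V, and no two vertices of U are adjacent. Then det(G) = 2n and det'(G) = n. In particular, for every positive integer n there exists a connected graph G with det(G) = 2n and det'(G) = n, so the bound det(G) ≤ 2·det'(G) is sharp. -/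
/-- The join `N_{n+1} + K_{n+1}` of the empty graph on `n + 1` vertices (the left summand)
with the complete graph on `n + 1` vertices (the right summand): any two distinct right
vertices are adjacent, every left vertex is adjacent to every right vertex, and no two
left vertices are adjacent. -/
def emptyJoinComplete (n : ℕ) : SimpleGraph (Fin (n + 1) ⊕ Fin (n + 1)) :=
  SimpleGraph.fromRel (fun u v => u.isRight ∨ v.isRight)

lemma adj_iff (n : ℕ) (u v : Fin (n+1) ⊕ Fin (n+1)) :
    (emptyJoinComplete n).Adj u v ↔ u ≠ v ∧ (u.isRight ∨ v.isRight) := by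
  simp only [emptyJoinComplete, SimpleGraph.fromRel_adj]
  tauto

def autOfPerms (n : ℕ) (σ τ : Equiv.Perm (Fin (n+1))) :
    emptyJoinComplete n ≃g emptyJoinComplete n where
  toEquiv := Equiv.sumCongr σ τ
  map_rel_iff' := by
    intro u v
    simp only [adj_iff, Equiv.coe_fn_mk, ne_eq, EmbeddingLike.apply_eq_iff_eq]
    cases u <;> cases v <;> simp

lemma exists_ne_fin {n : ℕ} (hn : 0 < n) (a : Fin (n+1)) : ∃ b : Fin (n+1), b ≠ a := by
  have h : 1 < Fintype.card (Fin (n+1)) := by simp; omega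
  exact Fintype.exists_ne_of_one_lt_card h a

lemma isRight_char {n : ℕ} (hn : 0 < n) (u : Fin (n+1) ⊕ Fin (n+1)) :
    u.isRight = true ↔ ∀ v, v ≠ u → (emptyJoinComplete n).Adj u v := by
  constructor
  · intro h v hv
    rw [adj_iff]
    exact ⟨fun e => hv e.symm, Or.inl h⟩
  · intro h
    by_contra hr
    obtain a | a := u
    · obtain ⟨b, hb⟩ := exists_ne_fin hn a
      have := h (Sum.inl b) (by simp [hb])
      rw [adj_iff] at this
      simp at this
    · simp at hr

lemma isRight_map {n : ℕ} (hn : 0 < n) (φ : emptyJoinComplete n ≃g emptyJoinComplete n)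
    (u : Fin (n+1) ⊕ Fin (n+1)) : (φ u).isRight = u.isRight := by
  have key : ∀ (ψ : emptyJoinComplete n ≃g emptyJoinComplete n) (w : Fin (n+1) ⊕ Fin (n+1)),
      w.isRight = true → (ψ w).isRight = true := by
    intro ψ w hw
    rw [isRight_char hn] at hw ⊢
    intro v hv
    have h1 : ψ.symm v ≠ w := by
      intro e
      apply hv
      rw [← e]
      simp
    have h2 := hw (ψ.symm v) h1
    have h3 := ψ.map_adj_iff.mpr h2
    simpa using h3
  by_cases h : u.isRight = true
  · rw [h, key φ u h]
  · simp only [Bool.not_eq_true] at h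
    rw [h]
    by_contra h2
    simp only [Bool.not_eq_false] at h2
    have h3 := key φ.symm (φ u) h2
    rw [show φ.symm (φ u) = u from φ.symm_apply_apply u, h] at h3
    exact Bool.false_ne_true h3

lemma fix_one {n : ℕ} (hn : 0 < n) (φ : emptyJoinComplete n ≃g emptyJoinComplete n)
    (c : Fin (n+1)) (hl : ∀ i, i ≠ c → φ (Sum.inl i) = Sum.inl i) :
    φ (Sum.inl c) = Sum.inl c := by
  have hside := isRight_map hn φ (Sum.inl c)
  rcases h' : φ (Sum.inl c) with m | m
  · by_cases hm : m = c
    · rw [hm]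
    · have h2 := hl m hm
      have h3 := φ.injective (h'.trans h2.symm)
      simp only [Sum.inl.injEq] at h3
      exact absurd h3.symm hm
  · rw [h'] at hside
    simp at hside

lemma fix_one' {n : ℕ} (hn : 0 < n) (φ : emptyJoinComplete n ≃g emptyJoinComplete n)
    (d : Fin (n+1)) (hr : ∀ i, i ≠ d → φ (Sum.inr i) = Sum.inr i) :
    φ (Sum.inr d) = Sum.inr d := by
  have hside := isRight_map hn φ (Sum.inr d)
  rcases h' : φ (Sum.inr d) with m | m
  · rw [h'] at hside
    simp at hside
  · by_cases hm : m = d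
    · rw [hm]
    · have h2 := hr m hm
      have h3 := φ.injective (h'.trans h2.symm)
      simp only [Sum.inr.injEq] at h3
      exact absurd h3.symm hm

lemma fix_all {n : ℕ} (hn : 0 < n) (φ : emptyJoinComplete n ≃g emptyJoinComplete n)
    (c d : Fin (n+1))
    (hl : ∀ i, i ≠ c → φ (Sum.inl i) = Sum.inl i)
    (hr : ∀ i, i ≠ d → φ (Sum.inr i) = Sum.inr i) :
    ∀ w, φ w = w := by
  rintro (i | i)
  · by_cases h : i = c
    · rw [h]; exact fix_one hn φ c hl
    · exact hl i h
  · by_cases h : i = d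
    · rw [h]; exact fix_one' hn φ d hr
    · exact hr i h

lemma autOfPerms_inl {n : ℕ} (σ τ : Equiv.Perm (Fin (n+1))) (a : Fin (n+1)) :
    autOfPerms n σ τ (Sum.inl a) = Sum.inl (σ a) := rfl

lemma autOfPerms_inr {n : ℕ} (σ τ : Equiv.Perm (Fin (n+1))) (a : Fin (n+1)) :
    autOfPerms n σ τ (Sum.inr a) = Sum.inr (τ a) := rfl

lemma vertexDet_upper {n : ℕ} (hn : 0 < n) :
    ∃ S : Finset (Fin (n+1) ⊕ Fin (n+1)), S.card = 2*n ∧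
      IsVertexDetSet (emptyJoinComplete n) ↑S := by
  refine ⟨((Finset.univ.erase (Fin.last n)).image Sum.inl) ∪
      ((Finset.univ.erase (Fin.last n)).image Sum.inr), ?_, ?_⟩
  · rw [Finset.card_union_of_disjoint (by simp [Finset.disjoint_left]),
      Finset.card_image_of_injective _ Sum.inl_injective,
      Finset.card_image_of_injective _ Sum.inr_injective,
      Finset.card_erase_of_mem (Finset.mem_univ _), Finset.card_univ]
    simp
    ring
  · intro φ hfix w
    apply fix_all hn φ (Fin.last n) (Fin.last n) _ _ w
    · intro i hi
      apply hfix
      simp only [Finset.coe_union, Finset.coe_image, Set.mem_union]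
      left
      exact ⟨i, by simp [hi], rfl⟩
    · intro i hi
      apply hfix
      simp only [Finset.coe_union, Finset.coe_image, Set.mem_union]
      right
      exact ⟨i, by simp [hi], rfl⟩

lemma edgeDet_upper {n : ℕ} (hn : 0 < n) :
    ∃ T : Finset (Sym2 (Fin (n+1) ⊕ Fin (n+1))), T.card = n ∧
      IsEdgeDetSet (emptyJoinComplete n) ↑T := by
  refine ⟨(Finset.univ.erase (Fin.last n)).image
      (fun i => s(Sum.inl i, Sum.inr i)), ?_, ?_, ?_⟩
  · rw [Finset.card_image_of_injective _ ?_,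
      Finset.card_erase_of_mem (Finset.mem_univ _), Finset.card_univ]
    · simp
    · intro i j hij
      rw [Sym2.eq_iff] at hij
      rcases hij with ⟨h1, _⟩ | ⟨h1, _⟩
      · exact Sum.inl_injective h1
      · exact absurd h1 (by simp)
  · intro e he
    simp only [Finset.coe_image, Set.mem_image, Finset.mem_coe] at he
    obtain ⟨i, _, rfl⟩ := he
    rw [SimpleGraph.mem_edgeSet, adj_iff]
    exact ⟨by simp, Or.inr rfl⟩
  · intro φ hfix w
    apply fix_all hn φ (Fin.last n) (Fin.last n) _ _ w
    all_goals {
      intro i hi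
      have he := hfix s(Sum.inl i, Sum.inr i) (by
        simp only [Finset.coe_image, Set.mem_image, Finset.mem_coe]
        exact ⟨i, by simp [hi], rfl⟩)
      rw [Sym2.map_pair_eq, Sym2.eq_iff] at he
      rcases he with ⟨h1, h2⟩ | ⟨h1, h2⟩
      · first | exact h1 | exact h2
      · exfalso
        have := isRight_map hn φ (Sum.inl i)
        rw [h1] at this
        simp at this }

lemma swap_fixes {n : ℕ} (a b c : Fin (n+1)) (ha : c ≠ a) (hb : c ≠ b) :
    autOfPerms n (Equiv.swap a b) 1 (Sum.inl c) = Sum.inl c := by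
  rw [autOfPerms_inl, Equiv.swap_apply_of_ne_of_ne ha hb]

lemma vertexDet_lower {n : ℕ} (hn : 0 < n) (S : Finset (Fin (n+1) ⊕ Fin (n+1)))
    (hdet : IsVertexDetSet (emptyJoinComplete n) ↑S) : 2*n ≤ S.card := by
  classical
  set A := S.preimage Sum.inl (Sum.inl_injective.injOn) with hA_def
  set B := S.preimage Sum.inr (Sum.inr_injective.injOn) with hB_def
  have hA : n ≤ A.card := by
    by_contra hA
    push_neg at hA
    have hcompl : 1 < Aᶜ.card := by
      rw [Finset.card_compl]
      simp only [Fintype.card_fin]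
      omega
    obtain ⟨a, ha, b, hb, hab⟩ := Finset.one_lt_card.mp hcompl
    rw [Finset.mem_compl] at ha hb
    set φ := autOfPerms n (Equiv.swap a b) 1 with hφ
    have hfix : ∀ v ∈ (↑S : Set (Fin (n+1) ⊕ Fin (n+1))), φ v = v := by
      rintro (c | c) hc
      · refine swap_fixes a b c ?_ ?_
        · rintro rfl; exact ha (Finset.mem_preimage.mpr hc)
        · rintro rfl; exact hb (Finset.mem_preimage.mpr hc)
      · exact autOfPerms_inr _ _ c
    have := hdet φ hfix (Sum.inl a)
    rw [hφ, autOfPerms_inl, Equiv.swap_apply_left] at this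
    exact hab (Sum.inl_injective this).symm
  have hB : n ≤ B.card := by
    by_contra hB
    push_neg at hB
    have hcompl : 1 < Bᶜ.card := by
      rw [Finset.card_compl]
      simp only [Fintype.card_fin]
      omega
    obtain ⟨a, ha, b, hb, hab⟩ := Finset.one_lt_card.mp hcompl
    rw [Finset.mem_compl] at ha hb
    set φ := autOfPerms n 1 (Equiv.swap a b) with hφ
    have hfix : ∀ v ∈ (↑S : Set (Fin (n+1) ⊕ Fin (n+1))), φ v = v := by
      rintro (c | c) hc
      · exact autOfPerms_inl _ _ c
      · rw [autOfPerms_inr, Equiv.swap_apply_of_ne_of_ne]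
        · rintro rfl; exact ha (Finset.mem_preimage.mpr hc)
        · rintro rfl; exact hb (Finset.mem_preimage.mpr hc)
    have := hdet φ hfix (Sum.inr a)
    rw [hφ, autOfPerms_inr, Equiv.swap_apply_left] at this
    exact hab (Sum.inr_injective this).symm
  have hsub : A.image Sum.inl ∪ B.image Sum.inr ⊆ S := by
    intro x hx
    rw [Finset.mem_union] at hx
    rcases hx with hx | hx
    · obtain ⟨c, hc, rfl⟩ := Finset.mem_image.mp hx
      exact Finset.mem_preimage.mp hc
    · obtain ⟨c, hc, rfl⟩ := Finset.mem_image.mp hx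
      exact Finset.mem_preimage.mp hc
  calc 2*n = n + n := by ring
    _ ≤ A.card + B.card := Nat.add_le_add hA hB
    _ = (A.image Sum.inl ∪ B.image Sum.inr).card := by
        rw [Finset.card_union_of_disjoint (by simp [Finset.disjoint_left]),
          Finset.card_image_of_injective _ Sum.inl_injective,
          Finset.card_image_of_injective _ Sum.inr_injective]
    _ ≤ S.card := Finset.card_le_card hsub

lemma edgeDet_lower {n : ℕ} (hn : 0 < n) (T : Finset (Sym2 (Fin (n+1) ⊕ Fin (n+1))))
    (hdet : IsEdgeDetSet (emptyJoinComplete n) ↑T) : n ≤ T.card := by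
  classical
  obtain ⟨hsub, hdet⟩ := hdet
  by_contra hT
  push_neg at hT
  set F : Finset (Fin (n+1)) :=
    Finset.univ.filter (fun a => ∃ e ∈ T, Sum.inl a ∈ e) with hF_def
  have hFcard : F.card ≤ T.card := by
    set f : Fin (n+1) → Sym2 (Fin (n+1) ⊕ Fin (n+1)) :=
      fun a => if h : ∃ e ∈ T, Sum.inl a ∈ e then h.choose
        else s(Sum.inl a, Sum.inl a) with hf_def
    have hmem : ∀ a ∈ F, ∃ e ∈ T, Sum.inl a ∈ e :=
      fun a ha => (Finset.mem_filter.mp ha).2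
    have hf1 : ∀ a ∈ F, f a ∈ T := by
      intro a ha
      have h := hmem a ha
      simp only [hf_def, dif_pos h]
      exact h.choose_spec.1
    have hf2 : ∀ a ∈ F, Sum.inl a ∈ f a := by
      intro a ha
      have h := hmem a ha
      simp only [hf_def, dif_pos h]
      exact h.choose_spec.2
    apply Finset.card_le_card_of_injOn f hf1
    intro a ha b hb hfab
    by_contra hab
    have h1 : Sum.inl a ∈ f a := hf2 a ha
    have h2 : Sum.inl b ∈ f a := hfab ▸ hf2 b hb
    have hne : (Sum.inl a : Fin (n+1) ⊕ Fin (n+1)) ≠ Sum.inl b := by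
      simp [hab]
    have heq : f a = s(Sum.inl a, Sum.inl b) :=
      (Sym2.mem_and_mem_iff hne).mp ⟨h1, h2⟩
    have hedge := hsub (hf1 a ha)
    rw [heq, SimpleGraph.mem_edgeSet, adj_iff] at hedge
    simp at hedge
  have hcompl : 1 < Fᶜ.card := by
    rw [Finset.card_compl]
    simp only [Fintype.card_fin]
    omega
  obtain ⟨a, ha, b, hb, hab⟩ := Finset.one_lt_card.mp hcompl
  rw [Finset.mem_compl] at ha hb
  set φ := autOfPerms n (Equiv.swap a b) 1 with hφ
  have hfixv : ∀ e ∈ T, ∀ x ∈ e, φ x = x := by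
    rintro e he (c | c) hx
    · have hcF : c ∈ F := Finset.mem_filter.mpr ⟨Finset.mem_univ _, e, he, hx⟩
      refine swap_fixes a b c ?_ ?_
      · rintro rfl; exact ha hcF
      · rintro rfl; exact hb hcF
    · exact autOfPerms_inr _ _ c
  have hfix : ∀ e ∈ (↑T : Set (Sym2 (Fin (n+1) ⊕ Fin (n+1)))), Sym2.map φ e = e := by
    intro e he
    rw [Finset.mem_coe] at he
    induction e with
    | _ x y =>
      rw [Sym2.map_pair_eq, hfixv _ he x (Sym2.mem_mk_left x y),
        hfixv _ he y (Sym2.mem_mk_right x y)]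
  have := hdet φ hfix (Sum.inl a)
  rw [hφ, autOfPerms_inl, Equiv.swap_apply_left] at this
  exact hab (Sum.inl_injective this).symm


theorem detNum_eq_two_mul_detIndex_sharp (n : ℕ) (hn : 0 < n) :
    (emptyJoinComplete n).Connected ∧
      detNum (emptyJoinComplete n) = 2 * n ∧ detIndex (emptyJoinComplete n) = n := by
  refine ⟨?_, ?_, ?_⟩
  · rw [SimpleGraph.connected_iff]
    refine ⟨fun u v => ?_, ⟨Sum.inr 0⟩⟩
    have key : ∀ w, (emptyJoinComplete n).Reachable w (Sum.inr 0) := by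
      intro w
      by_cases h : w = Sum.inr 0
      · rw [h]
      · exact SimpleGraph.Adj.reachable (by rw [adj_iff]; exact ⟨h, Or.inr rfl⟩)
    exact (key u).trans (key v).symm
  · obtain ⟨S, hScard, hSdet⟩ := vertexDet_upper hn
    have hmem : 2*n ∈ {k | ∃ S : Finset (Fin (n+1) ⊕ Fin (n+1)),
        S.card = k ∧ IsVertexDetSet (emptyJoinComplete n) ↑S} := ⟨S, hScard, hSdet⟩
    refine le_antisymm (Nat.sInf_le hmem) (le_csInf ⟨_, hmem⟩ ?_)
    rintro k ⟨S', hS'card, hS'det⟩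
    rw [← hS'card]
    exact vertexDet_lower hn S' hS'det
  · obtain ⟨T, hTcard, hTdet⟩ := edgeDet_upper hn
    have hmem : n ∈ {k | ∃ T : Finset (Sym2 (Fin (n+1) ⊕ Fin (n+1))),
        T.card = k ∧ IsEdgeDetSet (emptyJoinComplete n) ↑T} := ⟨T, hTcard, hTdet⟩
    refine le_antisymm (Nat.sInf_le hmem) (le_csInf ⟨_, hmem⟩ ?_)
    rintro k ⟨T', hT'card, hT'det⟩
    rw [← hT'card]
    exact edgeDet_lower hn T' hT'det
end

section
/- Let n ≥ 3 and let Q_n be the n-dimensional hypercube graph. If n - ⌈log₂ n⌉ > 2^{⌈log₂ n⌉ - 1}, then det'(Q_n) = ⌈log₂ n⌉ + 1; otherwise det'(Q_n) = ⌈log₂ n⌉. -/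
/-- The `n`-dimensional hypercube: vertices are the 0-1 strings of length `n`,
with two strings adjacent iff they differ in exactly one coordinate. -/
def hypercubeGraph (n : ℕ) : SimpleGraph (Fin n → Bool) where
  Adj x y := hammingDist x y = 1
  symm := by
    constructor
    intro x y h
    rwa [hammingDist_comm]
  loopless := by
    constructor
    intro x h
    simp [hammingDist_self] at h

/-! An automorphism of `Q_n` preserves Hamming distance, which is the graph distance, hence
has the form `x ↦ c + x ∘ σ` for a translation `c` and a coordinate permutation `σ`. Write the
edges of `T` as `{x_t, x_t + e_{d_t}}`. Such an automorphism fixes all of them iff `σ` fixes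
every direction `d_t` and `c j + x_t (σ j) = x_t j` for `j ≠ d_t`. So `T` can only be
determining if the columns `(x_t j)_t` at the at least `n - |T|` coordinates `j` that are no
direction are pairwise distinct and non-complementary (otherwise swapping two offending
coordinates, and complementing both in the complementary case, fixes `T`), which forces
`2 (n - |T|) ≤ 2 ^ |T|`; conversely, `k ≥ 2` edges in distinct directions with such columns are
determining as soon as `2 (n - k) ≤ 2 ^ k`. Hence `det'(Q_n)` is the least `k` with
`2 (n - k) ≤ 2 ^ k`, which is read off from `⌈log₂ n⌉`. -/

open Function

theorem Bool.add_one_eq_not (b : Bool) : b + 1 = !b := by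
  cases b <;> rfl

theorem Bool.add_add_eq_of_add_eq_add {a b α β : Bool} (h : a + α = b + β) : α + β + b = a := by
  revert a b α β
  decide

theorem Bool.eq_add_of_eq_zero_iff {a b c : Bool} (h : a = 0 ↔ b = c) : b = c + a := by
  revert a b c
  decide

theorem Pi.single_one_injective {ι : Type*} [DecidableEq ι] :
    Injective fun i : ι => (Pi.single i 1 : ι → Bool) :=
  fun i j h => by simpa [Pi.single_apply] using congrFun h i

section Hamming

variable {ι β : Type*} [Fintype ι] [DecidableEq β]

theorem hammingDist_add_left [AddGroup β] (c x y : ι → β) :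
    hammingDist (c + x) (c + y) = hammingDist x y :=
  hammingDist_comp (fun i => (c i + ·)) fun i => add_right_injective (c i)

theorem hammingDist_comp_equiv {ι' : Type*} [Fintype ι'] (x y : ι → β) (σ : ι' ≃ ι) :
    hammingDist (x ∘ σ) (y ∘ σ) = hammingDist x y :=
  Finset.card_equiv σ (by simp)

variable [DecidableEq ι]

theorem hammingDist_add_single_one (x y : ι → Bool) (i : ι) :
    hammingDist x (y + Pi.single i 1) =
      if x i = y i then hammingDist x y + 1 else hammingDist x y - 1 := by
  unfold hammingDist
  split_ifs with h
  · rw [← Finset.card_insert_of_notMem (a := i) (by simp [h])]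
    congr 1
    ext j
    by_cases hj : j = i <;> simp [hj, h, Bool.add_one_eq_not]
  · rw [← Finset.card_erase_of_mem (a := i) (by simpa using h)]
    congr 1
    ext j
    by_cases hj : j = i <;> simp [hj, h, Bool.add_one_eq_not]

theorem eq_iff_hammingDist_add_single_one (x y : ι → Bool) (i : ι) :
    x i = y i ↔ hammingDist x (y + Pi.single i 1) = hammingDist x y + 1 := by
  rw [hammingDist_add_single_one]
  split_ifs with h <;> simp only [h, false_iff]
  omega

end Hamming

theorem detIndex_eq_of_forall_le {V : Type*} {G : SimpleGraph V} {k : ℕ}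
    (hk : ∃ T : Finset (Sym2 V), T.card = k ∧ IsEdgeDetSet G ↑T)
    (hmin : ∀ T : Finset (Sym2 V), IsEdgeDetSet G ↑T → k ≤ T.card) : detIndex G = k :=
  le_antisymm (Nat.sInf_le hk) (le_csInf ⟨k, hk⟩ fun _ ⟨T, hT, hdet⟩ => hT ▸ hmin T hdet)

theorem exists_injective_add_const (N : Type*) [Fintype N] {k : ℕ} (hk : 0 < k)
    (h : 2 * Fintype.card N ≤ 2 ^ k) :
    ∃ f : N → Fin k → Bool, Injective fun p : N × Bool => fun t => f p.1 t + p.2 := by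
  obtain ⟨k, rfl⟩ := Nat.exists_eq_succ_of_ne_zero hk.ne'
  obtain ⟨e⟩ : Nonempty (N ↪ (Fin k → Bool)) :=
    Function.Embedding.nonempty_of_card_le (by
      rw [Fintype.card_fun, Fintype.card_bool, Fintype.card_fin]
      rw [pow_succ] at h
      omega)
  refine ⟨fun j => Fin.cons 0 (e j), ?_⟩
  rintro ⟨a, α⟩ ⟨b, β⟩ h
  obtain rfl : α = β := by simpa using congrFun h 0
  have : e a = e b := funext fun t => by simpa using congrFun h t.succ
  rw [e.injective this]

namespace hypercubeGraph

variable {n m : ℕ}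

theorem adj_iff_hammingDist {x y : Fin n → Bool} :
    (hypercubeGraph n).Adj x y ↔ hammingDist x y = 1 :=
  Iff.rfl

theorem adj_iff {x y : Fin n → Bool} :
    (hypercubeGraph n).Adj x y ↔ ∃ i, y = x + Pi.single i 1 := by
  rw [adj_iff_hammingDist]
  constructor
  · intro h
    obtain ⟨i, hi⟩ := Function.ne_iff.mp (hammingDist_pos.mp (h ▸ one_pos))
    refine ⟨i, hammingDist_eq_zero.mp ?_⟩
    rw [hammingDist_add_single_one, if_neg (Ne.symm hi), hammingDist_comm, h]
  · rintro ⟨i, rfl⟩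
    simp [hammingDist_add_single_one]

theorem adj_add_single (x : Fin n → Bool) (i : Fin n) :
    (hypercubeGraph n).Adj x (x + Pi.single i 1) :=
  adj_iff.mpr ⟨i, rfl⟩

theorem hammingDist_le_length {x y : Fin n → Bool} (p : (hypercubeGraph n).Walk x y) :
    hammingDist x y ≤ p.length := by
  induction p with
  | nil => simp
  | @cons x y z h p ih =>
    have hxy : hammingDist x y = 1 := h
    have := hammingDist_triangle x y z
    simp only [SimpleGraph.Walk.length_cons]
    omega

theorem exists_walk_length_eq_hammingDist (x y : Fin n → Bool) :
    ∃ p : (hypercubeGraph n).Walk x y, p.length = hammingDist x y := by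
  induction h : hammingDist x y generalizing x with
  | zero =>
    obtain rfl := hammingDist_eq_zero.mp h
    exact ⟨.nil, rfl⟩
  | succ k ih =>
    obtain ⟨i, hi⟩ := Function.ne_iff.mp (hammingDist_ne_zero.mp (h.trans_ne k.succ_ne_zero))
    have hk : hammingDist (x + Pi.single i 1) y = k := by
      rw [hammingDist_comm, hammingDist_add_single_one, if_neg (Ne.symm hi), hammingDist_comm, h]
      rfl
    obtain ⟨p, hp⟩ := ih _ hk
    exact ⟨.cons (adj_add_single x i) p, by simp [hp]⟩

theorem hammingDist_map_le (φ : hypercubeGraph n →g hypercubeGraph m) (x y : Fin n → Bool) :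
    hammingDist (φ x) (φ y) ≤ hammingDist x y := by
  obtain ⟨p, hp⟩ := exists_walk_length_eq_hammingDist x y
  simpa [hp] using hammingDist_le_length (p.map φ)

theorem hammingDist_map_iso (φ : hypercubeGraph n ≃g hypercubeGraph m) (x y : Fin n → Bool) :
    hammingDist (φ x) (φ y) = hammingDist x y :=
  le_antisymm (hammingDist_map_le φ.toHom x y)
    (by simpa using hammingDist_map_le φ.symm.toHom (φ x) (φ y))

def aut (c : Fin n → Bool) (σ : Equiv.Perm (Fin n)) : hypercubeGraph n ≃g hypercubeGraph n where
  toFun x := c + x ∘ σ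
  invFun y := (y - c) ∘ σ.symm
  left_inv x := by ext; simp
  right_inv y := by ext; simp
  map_rel_iff' := by
    intro x y
    simp only [Equiv.coe_fn_mk, adj_iff_hammingDist, hammingDist_add_left, hammingDist_comp_equiv]

variable {c : Fin n → Bool} {σ : Equiv.Perm (Fin n)}

@[simp]
theorem aut_apply (x : Fin n → Bool) : aut c σ x = c + x ∘ σ :=
  rfl

theorem aut_add_single (x : Fin n → Bool) (i : Fin n) :
    aut c σ (x + Pi.single i 1) = aut c σ x + Pi.single (σ.symm i) 1 := by
  rw [aut_apply, aut_apply, Pi.add_comp, Pi.single_comp_equiv, add_assoc]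

theorem forall_aut_apply_eq_self_iff : (∀ x, aut c σ x = x) ↔ c = 0 ∧ σ = 1 := by
  constructor
  · intro h
    have hc : c = 0 := by simpa using h 0
    refine ⟨hc, Equiv.ext fun i => ?_⟩
    have := congrFun (h (Pi.single (σ i) 1)) i
    simp [hc, Pi.single_apply] at this
    exact this.symm
  · rintro ⟨rfl, rfl⟩ x
    simp

theorem exists_eq_aut (φ : hypercubeGraph n ≃g hypercubeGraph n) : ∃ c σ, φ = aut c σ := by
  have hunit (i : Fin n) : ∃ j, φ (Pi.single i 1) = φ 0 + Pi.single j 1 :=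
    adj_iff.mp (φ.map_adj_iff.mpr (by simpa using adj_add_single 0 i))
  choose π hπ using hunit
  have hπ_inj : Injective π := fun i j h =>
    Pi.single_one_injective (φ.injective ((hπ i).trans (h ▸ (hπ j).symm)))
  have hπ_bij := hπ_inj.bijective_of_finite
  refine ⟨φ 0, (Equiv.ofBijective π hπ_bij).symm, RelIso.ext fun x => funext fun j => ?_⟩
  obtain ⟨i, rfl⟩ := hπ_bij.surjective j
  -- `x i = 0` iff stepping from `0` to `e_i` moves away from `x`; transport this along `φ`
  have hdetect : x i = 0 ↔ φ x (π i) = φ 0 (π i) := by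
    have h0 := eq_iff_hammingDist_add_single_one x 0 i
    rw [Pi.zero_apply, zero_add, ← hammingDist_map_iso φ, ← hammingDist_map_iso φ x, hπ] at h0
    rw [h0, eq_iff_hammingDist_add_single_one]
  simpa using Bool.eq_add_of_eq_zero_iff hdetect

abbrev edge (x : Fin n → Bool) (i : Fin n) : Sym2 (Fin n → Bool) :=
  s(x, x + Pi.single i 1)

theorem edge_mem_edgeSet (x : Fin n → Bool) (i : Fin n) :
    edge x i ∈ (hypercubeGraph n).edgeSet :=
  adj_add_single x i

theorem exists_eq_edge {e : Sym2 (Fin n → Bool)} (he : e ∈ (hypercubeGraph n).edgeSet) :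
    ∃ x i, e = edge x i := by
  induction e using Sym2.ind with
  | _ x y =>
    rw [SimpleGraph.mem_edgeSet] at he
    obtain ⟨i, rfl⟩ := adj_iff.mp he
    exact ⟨x, i, rfl⟩

theorem add_single_add_single (x : Fin n → Bool) (i : Fin n) :
    x + Pi.single i 1 + Pi.single i 1 = x := by
  rw [add_assoc, ← Pi.single_add, BooleanRing.add_self, Pi.single_zero, add_zero]

theorem edge_eq_edge_iff {x y : Fin n → Bool} {i j : Fin n} :
    edge x i = edge y j ↔ i = j ∧ (x = y ∨ x = y + Pi.single j 1) := by
  constructor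
  · intro h
    rcases Sym2.eq_iff.mp h with ⟨rfl, h⟩ | ⟨hxy, hyx⟩
    · exact ⟨Pi.single_one_injective (add_left_cancel h), Or.inl rfl⟩
    · have hsum : (Pi.single j 1 + Pi.single i 1 : Fin n → Bool) = 0 := by
        rw [← left_eq_add (a := y), ← add_assoc, ← hxy, hyx]
      refine ⟨Pi.single_one_injective (funext fun k => ?_), Or.inr hxy⟩
      exact ((BooleanRing.add_eq_zero' _ _).mp (congrFun hsum k)).symm
  · rintro ⟨rfl, rfl | rfl⟩
    · rfl
    · rw [edge, add_single_add_single, Sym2.eq_swap]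

theorem map_aut_edge (x : Fin n → Bool) (i : Fin n) :
    Sym2.map (aut c σ) (edge x i) = edge (aut c σ x) (σ.symm i) := by
  rw [Sym2.map_mk, aut_add_single]

theorem eq_of_map_aut_edge_eq {x : Fin n → Bool} {i : Fin n}
    (h : Sym2.map (aut c σ) (edge x i) = edge x i) :
    σ i = i ∧ ∀ j ≠ i, c j + x (σ j) = x j := by
  rw [map_aut_edge, edge_eq_edge_iff, Equiv.symm_apply_eq] at h
  obtain ⟨hi, hx | hx⟩ := h
  · exact ⟨hi.symm, fun j _ => congrFun hx j⟩
  · refine ⟨hi.symm, fun j hj => ?_⟩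
    simpa [hj] using congrFun hx j

section Columns

variable {ι : Type*} (x : ι → Fin n → Bool) (d : ι → Fin n)

/-- Injectivity says that the columns of `x` at the coordinates that are no direction `d t` are
pairwise distinct and non-complementary. -/
def shiftedColumn (p : {j // j ∉ Set.range d} × Bool) : ι → Bool :=
  fun t => x t p.1 + p.2

theorem injective_shiftedColumn
    (hT : IsEdgeDetSet (hypercubeGraph n) (Set.range fun t => edge (x t) (d t))) :
    Injective (shiftedColumn x d) := by
  rintro ⟨⟨a, ha⟩, α⟩ ⟨⟨b, hb⟩, β⟩ hab
  have hcol (t : ι) : x t a + α = x t b + β := congrFun hab t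
  let c : Fin n → Bool := fun j => if j = a ∨ j = b then α + β else 0
  have hfix (t : ι) : aut c (Equiv.swap a b) (x t) = x t := by
    funext j
    by_cases hja : j = a
    · subst hja
      simpa [c] using Bool.add_add_eq_of_add_eq_add (hcol t)
    by_cases hjb : j = b
    · subst hjb
      simpa [c, hja, add_comm α β] using Bool.add_add_eq_of_add_eq_add (hcol t).symm
    simp [c, hja, hjb, Equiv.swap_apply_of_ne_of_ne hja hjb]
  have hid := hT.2 (aut c (Equiv.swap a b)) (by
    rintro _ ⟨t, rfl⟩
    have hta : d t ≠ a := fun h => ha ⟨t, h⟩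
    have htb : d t ≠ b := fun h => hb ⟨t, h⟩
    rw [map_aut_edge, hfix, Equiv.symm_swap, Equiv.swap_apply_of_ne_of_ne hta htb])
  obtain ⟨hc, hσ⟩ := forall_aut_apply_eq_self_iff.mp hid
  obtain rfl : a = b := Equiv.swap_eq_one_iff.mp hσ
  have : α + β = 0 := by simpa [c] using congrFun hc a
  rw [(BooleanRing.add_eq_zero' α β).mp this]

theorem isEdgeDetSet_of_injective_shiftedColumn (hd : ∀ s, ∃ t, d t ≠ d s)
    (hcol : Injective (shiftedColumn x d)) :
    IsEdgeDetSet (hypercubeGraph n) (Set.range fun t => edge (x t) (d t)) := by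
  refine ⟨Set.range_subset_iff.mpr fun t => edge_mem_edgeSet _ _, fun φ hφ => ?_⟩
  obtain ⟨c, σ, rfl⟩ := exists_eq_aut φ
  have hfix (t : ι) := eq_of_map_aut_edge_eq (hφ _ ⟨t, rfl⟩)
  have hfree (j : Fin n) (hj : j ∉ Set.range d) : σ j = j ∧ c j = 0 := by
    have hσj : σ j ∉ Set.range d := by
      rintro ⟨t, ht⟩
      exact hj ⟨t, σ.injective ((hfix t).1.trans ht)⟩
    have := @hcol (⟨σ j, hσj⟩, c j) (⟨j, hj⟩, 0) (funext fun t => by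
      rw [shiftedColumn, shiftedColumn, add_zero, add_comm]
      exact (hfix t).2 j fun h => hj ⟨t, h.symm⟩)
    simpa using this
  have hdir (s : ι) : σ (d s) = d s ∧ c (d s) = 0 := by
    obtain ⟨t, ht⟩ := hd s
    have := (hfix t).2 (d s) ht.symm
    rw [(hfix s).1] at this
    exact ⟨(hfix s).1, by simpa using this⟩
  have hall (j : Fin n) : σ j = j ∧ c j = 0 := by
    by_cases hj : j ∈ Set.range d
    · obtain ⟨s, rfl⟩ := hj
      exact hdir s
    · exact hfree j hj
  rw [forall_aut_apply_eq_self_iff]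
  exact ⟨funext fun j => (hall j).2, Equiv.ext fun j => (hall j).1⟩

end Columns

theorem two_mul_sub_card_le_of_isEdgeDetSet {T : Finset (Sym2 (Fin n → Bool))}
    (hT : IsEdgeDetSet (hypercubeGraph n) ↑T) : 2 * (n - T.card) ≤ 2 ^ T.card := by
  choose x d hxd using fun e : T => exists_eq_edge (hT.1 e.2)
  have hrange : (↑T : Set (Sym2 (Fin n → Bool))) = Set.range fun e => edge (x e) (d e) := by
    ext e
    constructor
    · intro he
      exact ⟨⟨e, he⟩, (hxd ⟨e, he⟩).symm⟩
    · rintro ⟨e, rfl⟩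
      simpa only [← hxd] using Finset.mem_coe.mpr e.2
  have hcard : Fintype.card ({j // j ∉ Set.range d} × Bool) ≤ Fintype.card (T → Bool) :=
    Fintype.card_le_of_injective _ (injective_shiftedColumn x d (hrange ▸ hT))
  have hdir : Fintype.card {j // j ∈ Set.range d} ≤ T.card := by
    convert Fintype.card_range_le d using 1
    simp
  rw [Fintype.card_prod, Fintype.card_subtype_compl, Fintype.card_fun, Fintype.card_bool,
    Fintype.card_fin, Fintype.card_coe] at hcard
  omega

theorem exists_isEdgeDetSet_card_eq {k : ℕ} (hk : 2 ≤ k) (hkn : k ≤ n)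
    (h : 2 * (n - k) ≤ 2 ^ k) :
    ∃ T : Finset (Sym2 (Fin n → Bool)), T.card = k ∧ IsEdgeDetSet (hypercubeGraph n) ↑T := by
  set d : Fin k → Fin n := Fin.castLE hkn
  have hd : Injective d := Fin.castLE_injective hkn
  have hfree : Fintype.card {j // j ∉ Set.range d} = n - k := by
    rw [Fintype.card_subtype_compl, Fintype.card_fin, Set.card_range_of_injective hd,
      Fintype.card_fin]
  obtain ⟨f, hf⟩ := exists_injective_add_const {j // j ∉ Set.range d} (by omega) (hfree ▸ h)
  let x : Fin k → Fin n → Bool := fun t j => if hj : j ∈ Set.range d then 0 else f ⟨j, hj⟩ t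
  have hcol : shiftedColumn x d = fun p t => f p.1 t + p.2 := by
    funext p t
    simp only [shiftedColumn, x, dif_neg p.1.2]
  refine ⟨Finset.univ.image fun t => edge (x t) (d t), ?_, ?_⟩
  · rw [Finset.card_image_of_injective _ fun s t h => hd (edge_eq_edge_iff.mp h).1,
      Finset.card_univ, Fintype.card_fin]
  · rw [Finset.coe_image, Finset.coe_univ, Set.image_univ]
    refine isEdgeDetSet_of_injective_shiftedColumn x d (fun s => ?_) (hcol ▸ hf)
    obtain ⟨t, ht⟩ := Fintype.exists_ne_of_one_lt_card (by rw [Fintype.card_fin]; omega) s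
    exact ⟨t, hd.ne ht⟩

theorem detIndex_eq {k : ℕ} (hk : 2 ≤ k) (hkn : k ≤ n) (hfit : 2 * (n - k) ≤ 2 ^ k)
    (hprev : 2 ^ (k - 1) < 2 * (n - (k - 1))) : detIndex (hypercubeGraph n) = k :=
  detIndex_eq_of_forall_le (exists_isEdgeDetSet_card_eq hk hkn hfit) fun T hT => by
    have hbound := two_mul_sub_card_le_of_isEdgeDetSet hT
    by_contra! hlt
    have : 2 ^ T.card ≤ 2 ^ (k - 1) := Nat.pow_le_pow_right two_pos (by omega)
    omega

end hypercubeGraph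

theorem detIndex_hypercube (n : ℕ) (hn : 3 ≤ n) :
    (n - Nat.clog 2 n > 2 ^ (Nat.clog 2 n - 1) →
      detIndex (hypercubeGraph n) = Nat.clog 2 n + 1) ∧
    (¬ (n - Nat.clog 2 n > 2 ^ (Nat.clog 2 n - 1)) →
      detIndex (hypercubeGraph n) = Nat.clog 2 n) := by
  set m := Nat.clog 2 n
  have hle : n ≤ 2 ^ m := Nat.le_pow_clog one_lt_two n
  have hlt : 2 ^ (m - 1) < n := Nat.pow_pred_clog_lt_self one_lt_two (by omega)
  have hm : 1 < m := (Nat.lt_clog_iff_pow_lt one_lt_two).mpr (by omega)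
  have hpow₁ : 2 ^ m = 2 * 2 ^ (m - 1) := by rw [← pow_succ', Nat.sub_add_cancel hm.le]
  have hpow₂ : 2 ^ (m - 1) = 2 * 2 ^ (m - 2) := by rw [← pow_succ']; congr 1; omega
  have hgrow : m - 2 < 2 ^ (m - 2) := Nat.lt_two_pow_self
  constructor
  · intro h
    refine hypercubeGraph.detIndex_eq (by omega) (by omega) ?_ ?_
    · rw [pow_succ]; omega
    · rw [Nat.add_sub_cancel]; omega
  · intro h
    exact hypercubeGraph.detIndex_eq hm (by omega) (by omega) (by omega)
end
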